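/- arXiv:2512.07736 — 5 statements merged into one kernel-verified Lean document; each statement's English description precedes it below -/
import Mathlib

section
/- Let (X, 𝓜, μ) be a measure space equipped with a doubling and regular ball-basis 𝔅 (with constants 𝒦, η, θ). Then there exists an admissible constant γ > 2 with the following property: for every 0 < ε < 1, setting α = 1 − εθ/(4γ²𝒦), every function g : X → ℝ (possibly non-measurable) with ‖g‖_{BMO_α} := sup_{B∈𝔅} OSC_{B,α}(g) < ∞ satisfies: for every ball B ∈ 𝔅 and every λ > 0 with μ*({x ∈ B : |g(x)| > λ}) ≤ (θ/(5𝒦γ²)) · μ(B), one has μ*({x ∈ B : |g(x)| > λ + ‖g‖_{BMO_α}}) ≤ ε · μ*({x ∈ B : |g(x)| > λ}). -/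
open MeasureTheory Set
open scoped ENNReal NNReal symmDiff

variable {X : Type*}

structure IsBallBasis [MeasurableSpace X] (μ : Measure X) (𝔅 : Set (Set X))
    (hull : Set X → Set X) (K : ℝ) : Prop where
  measurableSet : ∀ B ∈ 𝔅, MeasurableSet B
  measure_pos : ∀ B ∈ 𝔅, 0 < μ B
  measure_lt_top : ∀ B ∈ 𝔅, μ B < ∞
  exists_ball : ∀ x y : X, ∃ B ∈ 𝔅, x ∈ B ∧ y ∈ B
  approx : ∀ E : Set X, MeasurableSet E → ∀ ε : ℝ≥0∞, 0 < ε →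
    ∃ 𝒞 ⊆ 𝔅, 𝒞.Countable ∧ μ (E ∆ ⋃₀ 𝒞) < ε
  hull_mem : ∀ B ∈ 𝔅, hull B ∈ 𝔅
  hull_measure : ∀ B ∈ 𝔅, μ (hull B) ≤ ENNReal.ofReal K * μ B
  subset_hull : ∀ B ∈ 𝔅, ∀ A ∈ 𝔅, μ A ≤ 2 * μ B → (A ∩ B).Nonempty → A ⊆ hull B

def IsDoublingBasis [MeasurableSpace X] (μ : Measure X) (𝔅 : Set (Set X))
    (hull : Set X → Set X) (η : ℝ) : Prop :=
  ∀ B ∈ 𝔅, hull B ≠ Set.univ →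
    ∃ B' ∈ 𝔅, B ⊆ B' ∧ 2 * μ B ≤ μ B' ∧ μ B' ≤ ENNReal.ofReal η * μ B

def IsRegularBasis [MeasurableSpace X] (μ : Measure X) (𝔅 : Set (Set X))
    (hull : Set X → Set X) (θ : ℝ) : Prop :=
  ∀ A ∈ 𝔅, ∀ B ∈ 𝔅, μ B ≤ μ A → (B ∩ A).Nonempty →
    ENNReal.ofReal θ * μ (hull B) ≤ μ (hull B ∩ A)

/-- The mean `f_B` of `f` over a set `B`. -/
noncomputable def mean [MeasurableSpace X] (μ : Measure X) (f : X → ℝ) (B : Set X) : ℝ :=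
  (∫ x in B, f x ∂μ) / (μ B).toReal

/-- `⟨f⟩_B`, the `L^r` average of `f` over `B`, valued in `ℝ≥0∞`. -/
noncomputable def avgNorm [MeasurableSpace X] (μ : Measure X) (r : ℝ) (f : X → ℝ) (B : Set X) :
    ℝ≥0∞ :=
  ((∫⁻ x in B, ENNReal.ofReal |f x| ^ r ∂μ) / μ B) ^ (1 / r)

/-- `⟨f⟩_{#,B}`. -/
noncomputable def sharpNorm [MeasurableSpace X] (μ : Measure X) (r : ℝ) (f : X → ℝ) (B : Set X) :
    ℝ≥0∞ :=
  avgNorm μ r (fun x => f x - mean μ f B) B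

/-- `⟨f⟩*_{#,B}`. -/
noncomputable def sharpStar [MeasurableSpace X] (μ : Measure X) (𝔅 : Set (Set X)) (r : ℝ)
    (f : X → ℝ) (B : Set X) : ℝ≥0∞ :=
  ⨆ (A : Set X) (_ : A ∈ 𝔅 ∧ B ⊆ A), sharpNorm μ r f A

/-- `⟨f⟩*_B`. -/
noncomputable def avgStar [MeasurableSpace X] (μ : Measure X) (𝔅 : Set (Set X)) (r : ℝ)
    (f : X → ℝ) (B : Set X) : ℝ≥0∞ :=
  ⨆ (A : Set X) (_ : A ∈ 𝔅 ∧ B ⊆ A), avgNorm μ r f A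

/-- essential oscillation `OSC_E(f)` of a measurable function. -/
noncomputable def oscE [MeasurableSpace X] (μ : Measure X) (f : X → ℝ) (E : Set X) : ℝ≥0∞ :=
  essSup (fun p : X × X => ENNReal.ofReal |f p.1 - f p.2|) ((μ.restrict E).prod (μ.restrict E))

/-- pointwise oscillation `sup_{x,x'∈E} |g x − g x'|` of an arbitrary function. -/
noncomputable def oscSup (g : X → ℝ) (E : Set X) : ℝ≥0∞ :=
  ⨆ (x : X) (_ : x ∈ E) (y : X) (_ : y ∈ E), ENNReal.ofReal |g x - g y|

/-- `OSC_{B,β}(g)` for a possibly non-measurable `g`. -/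
noncomputable def oscBeta [MeasurableSpace X] (μ : Measure X) (g : X → ℝ) (B : Set X) (β : ℝ) :
    ℝ≥0∞ :=
  ⨅ (E : Set X) (_ : MeasurableSet E ∧ E ⊆ B ∧ ENNReal.ofReal β * μ B < μ E), oscSup g E

/-- `OSC_{B,α}(f)` for measurable `f` (essential-oscillation version). -/
noncomputable def oscAlpha [MeasurableSpace X] (μ : Measure X) (f : X → ℝ) (B : Set X) (α : ℝ) :
    ℝ≥0∞ :=
  ⨅ (E : Set X) (_ : MeasurableSet E ∧ E ⊆ B ∧ ENNReal.ofReal α * μ B < μ E), oscE μ f E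

/-- the `L^r` norm. -/
noncomputable def lrNorm [MeasurableSpace X] (μ : Measure X) (r : ℝ) (f : X → ℝ) : ℝ≥0∞ :=
  (∫⁻ x, ENNReal.ofReal |f x| ^ r ∂μ) ^ (1 / r)

/-- membership in `L^r(X)`. -/
def MemLr [MeasurableSpace X] (μ : Measure X) (r : ℝ) (f : X → ℝ) : Prop :=
  AEMeasurable f μ ∧ lrNorm μ r f < ∞

/-- the weak `L^{r,∞}` (outer-measure) quasinorm of a possibly non-measurable function. -/
noncomputable def wnorm [MeasurableSpace X] (μ : Measure X) (r : ℝ) (g : X → ℝ) : ℝ≥0∞ :=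
  ⨆ (t : ℝ) (_ : 0 < t), ENNReal.ofReal t * μ {x | t < |g x|} ^ (1 / r)

/-- `‖T‖_{L^r → L^{r,∞}}`. -/
noncomputable def opWeakNorm [MeasurableSpace X] (μ : Measure X) (r : ℝ)
    (T : (X → ℝ) → X → ℝ) : ℝ≥0∞ :=
  ⨆ (f : X → ℝ) (_ : MemLr μ r f ∧ lrNorm μ r f ≠ 0), wnorm μ r (T f) / lrNorm μ r f

/-- `T` is a `BO_ω` operator with constant `L`. -/
def IsBO [MeasurableSpace X] (μ : Measure X) (𝔅 : Set (Set X)) (hull : Set X → Set X)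
    (r : ℝ) (ω : ℝ → ℝ) (T : (X → ℝ) → X → ℝ) (L : ℝ≥0∞) : Prop :=
  (∀ f g : X → ℝ, MemLr μ r f → MemLr μ r g →
      ∀ᵐ x ∂μ, |T (f + g) x| ≤ |T f x| + |T g x|) ∧
  ∀ f : X → ℝ, MemLr μ r f → ∀ B ∈ 𝔅,
    oscE μ (T (Set.indicator (hull B)ᶜ f)) B ≤
      L * ⨆ (A : Set X) (_ : A ∈ 𝔅 ∧ B ⊆ A),
        ENNReal.ofReal (ω ((μ A).toReal / (μ B).toReal)) * avgNorm μ r f A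

/-- `T` is linear on `L^r` (a.e.). -/
def IsLinearOnLr [MeasurableSpace X] (μ : Measure X) (r : ℝ) (T : (X → ℝ) → X → ℝ) : Prop :=
  (∀ f g : X → ℝ, MemLr μ r f → MemLr μ r g →
      ∀ᵐ x ∂μ, T (f + g) x = T f x + T g x) ∧
  (∀ (c : ℝ) (f : X → ℝ), MemLr μ r f → ∀ᵐ x ∂μ, T (c • f) x = c * T f x)

/-- a family of operators is uniformly vanishing. -/
def UniformlyVanishing {ι : Type*} [MeasurableSpace X] (μ : Measure X) (𝔅 : Set (Set X))
    (T : ι → (X → ℝ) → X → ℝ) : Prop :=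
  ∀ B ∈ 𝔅, ∀ ε : ℝ, 0 < ε → ∃ B' ∈ 𝔅, B ⊆ B' ∧
    ∀ α, ∀ B'' ∈ 𝔅, B' ⊆ B'' →
      oscE μ (T α (Set.indicator B'' fun _ => (1 : ℝ))) B ≤ ENNReal.ofReal ε

/-!
Let `S = {x ∈ B : |g x| > λ}`, a set of density below `ρ = θ / (4γ²)` in `B`. Climbing the chain of
balls from any ball in which `S` has density at least `ρ`, one stops at a ball `A` in which `S` is
still dense but `S` is sparse in `hull A`. A Vitali selection among these stopping balls gives
disjoint balls whose hulls cover `S` up to the points of `S` lying in no dense ball, which form a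
null set by a density argument. On each hull `H`, regularity makes `H ∩ B` large while `S ∩ H` is
small, so the large set `E ⊆ H` on which `g` oscillates by less than `‖g‖_{BMO_α}` contains a point
with `|g| ≤ λ`. Hence `|g| > λ + ‖g‖_{BMO_α}` only on `H \ E`, a `(1 - α)` fraction of `H`, and
summing over the disjoint balls gives `(1 - α) K / ρ · μ(S) = ε μ(S)`.
-/

section Measure

variable [MeasurableSpace X] {μ : Measure X} {𝒢 : Set (Set X)}

lemma measure_inter_biUnion_le (hc : 𝒢.Countable) (hd : 𝒢.Pairwise Disjoint)
    (hm : ∀ G ∈ 𝒢, MeasurableSet G) {S : Set X} {f : Set X → Set X} {c : ℝ≥0∞}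
    (h : ∀ G ∈ 𝒢, μ (S ∩ f G) ≤ c * μ G) :
    μ (S ∩ ⋃ G ∈ 𝒢, f G) ≤ c * μ (⋃₀ 𝒢) := by
  rw [inter_iUnion₂, measure_sUnion hc hd hm, ← ENNReal.tsum_mul_left]
  exact (measure_biUnion_le μ hc _).trans (ENNReal.tsum_le_tsum fun G => h G G.2)

lemma mul_measure_sUnion_le (hc : 𝒢.Countable) (hd : 𝒢.Pairwise Disjoint)
    (hm : ∀ G ∈ 𝒢, MeasurableSet G) {U : Set X} {c : ℝ≥0∞}
    (h : ∀ G ∈ 𝒢, c * μ G ≤ μ (U ∩ G)) :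
    c * μ (⋃₀ 𝒢) ≤ μ (U ∩ ⋃₀ 𝒢) := by
  have hU : MeasurableSet (⋃₀ 𝒢) := MeasurableSet.sUnion hc hm
  rw [inter_comm, ← Measure.restrict_apply hU, measure_sUnion hc hd hm, measure_sUnion hc hd hm,
    ← ENNReal.tsum_mul_left]
  refine ENNReal.tsum_le_tsum fun G => ?_
  rw [Measure.restrict_apply (hm G G.2), inter_comm]
  exact h G G.2

lemma nonempty_inter_diff_of_measure_add_lt {E F H U : Set X} (hE : MeasurableSet E)
    (hEH : E ⊆ H) (hFH : F ⊆ H) (h : μ H + μ U < μ E + μ F) : ((E ∩ F) \ U).Nonempty := by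
  by_contra hempty
  rw [not_nonempty_iff_eq_empty, sdiff_eq_empty] at hempty
  refine h.not_ge ?_
  rw [← measure_union_add_inter' hE F]
  gcongr
  exact union_subset hEH hFH

lemma measure_setOf_lt_le_of_forall_pos {B : Set X} {f : X → ℝ} {c : ℝ} {a : ℝ≥0∞}
    (h : ∀ δ : ℝ, 0 < δ → μ {x ∈ B | c + δ < f x} ≤ a) : μ {x ∈ B | c < f x} ≤ a := by
  have hunion : {x ∈ B | c < f x} = ⋃ n : ℕ, {x ∈ B | c + 1 / ((n : ℝ) + 1) < f x} := by
    ext x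
    simp only [mem_ofPred_eq, mem_iUnion]
    constructor
    · rintro ⟨hxB, hx⟩
      obtain ⟨n, hn⟩ := exists_nat_one_div_lt (sub_pos.mpr hx)
      exact ⟨n, hxB, by linarith⟩
    · rintro ⟨n, hxB, hx⟩
      exact ⟨hxB, (lt_add_of_pos_right c (by positivity)).trans hx⟩
  have hmono : Monotone fun n : ℕ => {x ∈ B | c + 1 / ((n : ℝ) + 1) < f x} := by
    intro m n hmn x ⟨hxB, hx⟩
    refine ⟨hxB, lt_of_le_of_lt ?_ hx⟩
    gcongr
  rw [hunion, hmono.measure_iUnion]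
  exact iSup_le fun n => h _ (by positivity)

end Measure

section Oscillation

variable [MeasurableSpace X] {μ : Measure X}

lemma exists_subset_of_oscBeta_lt {g : X → ℝ} {H : Set X} {β t : ℝ}
    (h : oscBeta μ g H β < ENNReal.ofReal t) :
    ∃ E, MeasurableSet E ∧ E ⊆ H ∧ ENNReal.ofReal β * μ H < μ E ∧
      ∀ x ∈ E, ∀ y ∈ E, |g x - g y| < t := by
  simp only [oscBeta, iInf_lt_iff] at h
  obtain ⟨E, ⟨hE, hEH, hEμ⟩, hosc⟩ := h
  refine ⟨E, hE, hEH, hEμ, fun x hx y hy => ?_⟩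
  have hxy : ENNReal.ofReal |g x - g y| ≤ oscSup g E :=
    le_iSup₂_of_le x hx (le_iSup₂_of_le (f := fun y (_ : y ∈ E) => ENNReal.ofReal |g x - g y|)
      y hy le_rfl)
  exact (ENNReal.ofReal_lt_ofReal_iff'.mp (hxy.trans_lt hosc)).1

/-- `E` is large in `H`, and `H ∩ B` is large but barely meets `{|g| > lam}`, so some point of
`E` has `|g| ≤ lam`; the oscillation bound then keeps `|g| ≤ lam + t` on all of `E`. -/
lemma measure_superlevel_inter_le {B H E : Set X} {g : X → ℝ} {lam t θ α : ℝ}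
    (hH : μ H ≠ ∞) (hθ : 0 ≤ θ) (hα : 1 - θ / 2 ≤ α) (hα0 : 0 ≤ α)
    (hreg : ENNReal.ofReal θ * μ H ≤ μ (H ∩ B))
    (hsparse : μ ({x ∈ B | lam < |g x|} ∩ H) ≤ ENNReal.ofReal (θ / 2) * μ H)
    (hE : MeasurableSet E) (hEH : E ⊆ H) (hEμ : ENNReal.ofReal α * μ H < μ E)
    (hosc : ∀ x ∈ E, ∀ y ∈ E, |g x - g y| < t) :
    μ ({x ∈ B | lam + t < |g x|} ∩ H) ≤ ENNReal.ofReal (1 - α) * μ H := by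
  have hcount : μ H + μ ({x ∈ B | lam < |g x|} ∩ H) < μ E + μ (H ∩ B) := calc
    μ H + μ ({x ∈ B | lam < |g x|} ∩ H) ≤ ENNReal.ofReal (1 + θ / 2) * μ H := by
      rw [ENNReal.ofReal_add zero_le_one (by positivity), ENNReal.ofReal_one, add_mul, one_mul]
      gcongr
    _ ≤ ENNReal.ofReal α * μ H + ENNReal.ofReal θ * μ H := by
      rw [← add_mul, ← ENNReal.ofReal_add hα0 hθ]
      gcongr ENNReal.ofReal ?_ * _
      linarith
    _ < μ E + μ (H ∩ B) :=
      ENNReal.add_lt_add_of_lt_of_le (ENNReal.mul_ne_top ENNReal.ofReal_ne_top hH) hEμ hreg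
  obtain ⟨y, ⟨hyE, hyH, hyB⟩, hyS⟩ :=
    nonempty_inter_diff_of_measure_add_lt hE hEH inter_subset_left hcount
  have hy : |g y| ≤ lam := not_lt.mp fun h => hyS ⟨⟨hyB, h⟩, hyH⟩
  have hsub : {x ∈ B | lam + t < |g x|} ∩ H ⊆ H \ E := by
    rintro x ⟨⟨-, hx⟩, hxH⟩
    refine ⟨hxH, fun hxE => ?_⟩
    linarith [hosc x hxE y hyE, abs_sub_abs_le_abs_sub (g x) (g y)]
  calc μ ({x ∈ B | lam + t < |g x|} ∩ H) ≤ μ (H \ E) := measure_mono hsub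
    _ = μ H - μ E := measure_sdiff hEH hE.nullMeasurableSet (ne_top_of_le_ne_top hH
        (measure_mono hEH))
    _ ≤ μ H - ENNReal.ofReal α * μ H := by gcongr
    _ = ENNReal.ofReal (1 - α) * μ H := by
      rw [ENNReal.ofReal_sub _ hα0, ENNReal.ofReal_one, ENNReal.sub_mul fun _ _ => hH, one_mul]

end Oscillation

-- One step `G_k ↦ G_{k+1}` of the paper's chains of balls; a chain that reaches `X` stops doubling.
def HasChainStep [MeasurableSpace X] (μ : Measure X) (𝔅 : Set (Set X)) (hull : Set X → Set X)
    (γ : ℝ) : Prop :=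
  ∀ A ∈ 𝔅, ∃ A' ∈ 𝔅, hull A ⊆ A' ∧ μ A' ≤ ENNReal.ofReal γ * μ A ∧ (2 * μ A ≤ μ A' ∨ A' = univ)

namespace IsBallBasis

variable [MeasurableSpace X] {μ : Measure X} {𝔅 : Set (Set X)} {hull : Set X → Set X} {K : ℝ}

lemma subset_hull_self (hb : IsBallBasis μ 𝔅 hull K) {B : Set X} (hB : B ∈ 𝔅) : B ⊆ hull B :=
  hb.subset_hull B hB B hB (le_mul_of_one_le_left zero_le one_le_two)
    (by rw [inter_self]; exact nonempty_of_measure_ne_zero (hb.measure_pos B hB).ne')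

lemma one_le (hb : IsBallBasis μ 𝔅 hull K) {B : Set X} (hB : B ∈ 𝔅) : 1 ≤ K := by
  have h : 1 * μ B ≤ ENNReal.ofReal K * μ B := by
    rw [one_mul]
    exact (measure_mono (hb.subset_hull_self hB)).trans (hb.hull_measure B hB)
  rw [ENNReal.mul_le_mul_iff_left (hb.measure_pos B hB).ne' (hb.measure_lt_top B hB).ne] at h
  exact ENNReal.one_le_ofReal.mp h

lemma exists_countable_disjoint_subfamily (hb : IsBallBasis μ 𝔅 hull K) {F : Set (Set X)}
    (hF : F ⊆ 𝔅) {V : Set X} (hV : μ V ≠ ∞) (hFV : ∀ A ∈ F, A ⊆ V) :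
    ∃ 𝒢 ⊆ F, 𝒢.Countable ∧ 𝒢.Pairwise Disjoint ∧ ∀ A ∈ F, ∃ G ∈ 𝒢, A ⊆ hull G := by
  have hfin : ∀ A ∈ F, μ A ≠ ∞ := fun A hA => ne_top_of_le_ne_top hV (measure_mono (hFV A hA))
  obtain ⟨𝒢, h𝒢F, hdisj, hcov⟩ := Vitali.exists_disjoint_subfamily_covering_enlargement id F
    (fun A => (μ A).toReal) 2 one_lt_two (fun _ _ => ENNReal.toReal_nonneg) (μ V).toReal
    (fun A hA => ENNReal.toReal_mono hV (measure_mono (hFV A hA)))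
    (fun A hA => nonempty_of_measure_ne_zero (hb.measure_pos A (hF hA)).ne')
  refine ⟨𝒢, h𝒢F, ?_, hdisj, fun A hA => ?_⟩
  · have hpos := Measure.countable_meas_pos_of_disjoint_of_meas_iUnion_ne_top μ
      (As := fun G : 𝒢 => (G : Set X)) (fun G => hb.measurableSet G (hF (h𝒢F G.2)))
      (fun G G' h => hdisj G.2 G'.2 (Subtype.coe_ne_coe.mpr h))
      (ne_top_of_le_ne_top hV (measure_mono (iUnion_subset fun G => hFV G (h𝒢F G.2))))
    have huniv : {G : 𝒢 | 0 < μ G} = univ :=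
      eq_univ_of_forall fun G => hb.measure_pos G (hF (h𝒢F G.2))
    rw [huniv, countable_univ_iff, countable_coe_iff] at hpos
    exact hpos
  · obtain ⟨G, hG, hne, hle⟩ := hcov A hA
    refine ⟨G, hG, hb.subset_hull G (hF (h𝒢F hG)) A (hF hA) ?_ hne⟩
    have hle' : (μ A).toReal ≤ (2 * μ G).toReal := by simpa using hle
    exact (ENNReal.toReal_le_toReal (hfin A hA)
      (ENNReal.mul_ne_top ENNReal.ofNat_ne_top (hfin G (h𝒢F hG)))).mp hle'

lemma exists_measure_le_mul_measure_inter (hb : IsBallBasis μ 𝔅 hull K) {W : Set X}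
    (hW : MeasurableSet W) (hW0 : μ W ≠ 0) (hWt : μ W ≠ ∞) :
    ∃ A ∈ 𝔅, μ A ≤ 4 * ENNReal.ofReal K * μ (W ∩ A) := by
  obtain ⟨x, hx⟩ := nonempty_of_measure_ne_zero hW0
  obtain ⟨B, hB, -⟩ := hb.exists_ball x x
  have hK : ENNReal.ofReal K ≠ 0 := ENNReal.ofReal_ne_zero_iff.mpr (by linarith [hb.one_le hB])
  by_contra! hlow
  obtain ⟨𝒞, h𝒞, h𝒞c, happrox⟩ := hb.approx W hW (μ W / 2) (ENNReal.half_pos hW0)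
  set V := ⋃₀ 𝒞
  set d := μ (W ∆ V)
  have hVW : μ V ≤ d + μ W := (measure_mono (le_symmDiff_sup_left W V)).trans (measure_union_le _ _)
  have hWV : μ W ≤ d + μ (W ∩ V) := by
    refine (measure_mono fun y hy => ?_).trans (measure_union_le _ _)
    by_cases hyV : y ∈ V <;> simp [symmDiff_def, hy, hyV]
  have hd : d ≠ ∞ := ne_top_of_lt (happrox.trans_le ENNReal.half_le_self)
  have hV : μ V ≠ ∞ := ne_top_of_le_ne_top (ENNReal.add_ne_top.mpr ⟨hd, hWt⟩) hVW
  obtain ⟨𝒢, h𝒢, h𝒢c, h𝒢d, hcov⟩ :=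
    hb.exists_countable_disjoint_subfamily h𝒞 hV fun A hA => subset_sUnion_of_mem hA
  have h𝒢m : ∀ G ∈ 𝒢, MeasurableSet G := fun G hG => hb.measurableSet G (h𝒞 (h𝒢 hG))
  have hsparse : ∀ G ∈ 𝒢, μ (W ∩ hull G) ≤ 4⁻¹ * μ G := by
    intro G hG
    have hG𝔅 := h𝒞 (h𝒢 hG)
    have h := (hlow _ (hb.hull_mem G hG𝔅)).le.trans (hb.hull_measure G hG𝔅)
    rw [mul_assoc, mul_left_comm, ENNReal.mul_le_mul_iff_right hK ENNReal.ofReal_ne_top] at h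
    exact (ENNReal.mul_le_iff_le_inv (by norm_num) (by norm_num)).mp h
  have hWVsmall : μ (W ∩ V) ≤ 4⁻¹ * μ V := calc
    μ (W ∩ V) ≤ μ (W ∩ ⋃ G ∈ 𝒢, hull G) := by
      refine measure_mono (inter_subset_inter_right _ (sUnion_subset fun A hA => ?_))
      obtain ⟨G, hG, hAG⟩ := hcov A hA
      exact hAG.trans (subset_biUnion_of_mem (u := hull) hG)
    _ ≤ 4⁻¹ * μ (⋃₀ 𝒢) := measure_inter_biUnion_le h𝒢c h𝒢d h𝒢m hsparse
    _ ≤ 4⁻¹ * μ V := by gcongr; exact sUnion_mono h𝒢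
  -- `μ W ≤ d + μ (W ∩ V) ≤ d + (d + μ W) / 4` is impossible when `d < μ W / 2`
  have hWVt : μ (W ∩ V) ≠ ∞ := ne_top_of_le_ne_top (ENNReal.mul_ne_top (by simp) hV) hWVsmall
  have e1 := ENNReal.toReal_mono (ENNReal.add_ne_top.mpr ⟨hd, hWVt⟩) hWV
  have e2 := ENNReal.toReal_mono (ENNReal.mul_ne_top (by simp) hV) hWVsmall
  have e3 := ENNReal.toReal_mono (ENNReal.add_ne_top.mpr ⟨hd, hWt⟩) hVW
  have e4 := (ENNReal.toReal_lt_toReal hd (ENNReal.div_ne_top hWt two_ne_zero)).mpr happrox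
  rw [ENNReal.toReal_add hd hWVt] at e1
  rw [ENNReal.toReal_add hd hWt] at e3
  simp only [ENNReal.toReal_mul, ENNReal.toReal_inv, ENNReal.toReal_div] at e2 e4
  norm_num at e2 e4
  linarith [ENNReal.toReal_pos hW0 hWt]

lemma measure_eq_zero_of_forall_measure_inter_lt (hb : IsBallBasis μ 𝔅 hull K) {ρ : ℝ}
    (hρ : 0 ≤ ρ) (hρK : ρ * (4 * K) ≤ 1) {U Z : Set X} (hZU : Z ⊆ U) (hZ : μ Z ≠ ∞)
    (hlow : ∀ x ∈ Z, ∀ C ∈ 𝔅, x ∈ C → μ (U ∩ C) < ENNReal.ofReal ρ * μ C) : μ Z = 0 := by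
  by_contra hZ0
  obtain ⟨A, hA, hAZ⟩ := hb.exists_measure_le_mul_measure_inter (measurableSet_toMeasurable μ Z)
    (by rwa [measure_toMeasurable]) (by rwa [measure_toMeasurable])
  rw [Measure.measure_toMeasurable_inter (hb.measurableSet A hA) hZ] at hAZ
  have hZA : μ (Z ∩ A) ≠ 0 := fun h =>
    (hb.measure_pos A hA).ne' (le_antisymm (by rwa [h, mul_zero] at hAZ) zero_le)
  obtain ⟨x, hxZ, hxA⟩ := nonempty_of_measure_ne_zero hZA
  have hconst : ENNReal.ofReal ρ * (4 * ENNReal.ofReal K) ≤ 1 := by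
    rw [← ENNReal.ofReal_ofNat, ← ENNReal.ofReal_mul (by norm_num), ← ENNReal.ofReal_mul hρ]
    exact ENNReal.ofReal_le_one.mpr hρK
  refine (hlow x hxZ A hA hxA).not_ge ?_
  calc ENNReal.ofReal ρ * μ A ≤ ENNReal.ofReal ρ * (4 * ENNReal.ofReal K * μ (Z ∩ A)) := by
        gcongr
    _ = ENNReal.ofReal ρ * (4 * ENNReal.ofReal K) * μ (Z ∩ A) := by ring
    _ ≤ μ (Z ∩ A) := mul_le_of_le_one_left zero_le hconst
    _ ≤ μ (U ∩ A) := measure_mono (inter_subset_inter_left _ hZU)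

lemma exists_superset_measure_le_pow_mul {η : ℝ} (hb : IsBallBasis μ 𝔅 hull K)
    (hd : IsDoublingBasis μ 𝔅 hull η) (hη : 1 ≤ η) {A : Set X} (hA : A ∈ 𝔅) (n : ℕ) :
    ∃ D ∈ 𝔅, A ⊆ D ∧ μ D ≤ (ENNReal.ofReal K * ENNReal.ofReal η) ^ n * μ A ∧
      (2 ^ n * μ A ≤ μ D ∨ D = univ) := by
  have hK : 1 ≤ ENNReal.ofReal K := ENNReal.one_le_ofReal.mpr (hb.one_le hA)
  have hη : 1 ≤ ENNReal.ofReal η := ENNReal.one_le_ofReal.mpr hη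
  induction n with
  | zero => exact ⟨A, hA, subset_rfl, by simp, Or.inl (by simp)⟩
  | succ n ih =>
    obtain ⟨D, hD, hAD, hDμ, hDgrow⟩ := ih
    by_cases hhull : hull D = univ
    · refine ⟨hull D, hb.hull_mem D hD, hAD.trans (hb.subset_hull_self hD), ?_, Or.inr hhull⟩
      calc μ (hull D) ≤ ENNReal.ofReal K * ((ENNReal.ofReal K * ENNReal.ofReal η) ^ n * μ A) :=
            (hb.hull_measure D hD).trans (by gcongr)
        _ = (ENNReal.ofReal K * ENNReal.ofReal η) ^ n * (ENNReal.ofReal K * 1) * μ A := by ring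
        _ ≤ (ENNReal.ofReal K * ENNReal.ofReal η) ^ (n + 1) * μ A := by rw [pow_succ]; gcongr
    · obtain ⟨D', hD', hDD', h2D, hD'μ⟩ := hd D hD hhull
      have hDne : D ≠ univ := fun h => hhull (univ_subset_iff.mp (h ▸ hb.subset_hull_self hD))
      refine ⟨D', hD', hAD.trans hDD', ?_, Or.inl ?_⟩
      · calc μ D' ≤ ENNReal.ofReal η * ((ENNReal.ofReal K * ENNReal.ofReal η) ^ n * μ A) :=
            hD'μ.trans (by gcongr)
          _ = (ENNReal.ofReal K * ENNReal.ofReal η) ^ n * (1 * ENNReal.ofReal η) * μ A := by ring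
          _ ≤ (ENNReal.ofReal K * ENNReal.ofReal η) ^ (n + 1) * μ A := by rw [pow_succ]; gcongr
      · calc 2 ^ (n + 1) * μ A = 2 * (2 ^ n * μ A) := by ring
          _ ≤ 2 * μ D := by gcongr; exact hDgrow.resolve_right hDne
          _ ≤ μ D' := h2D

lemma hasChainStep {η γ : ℝ} (hb : IsBallBasis μ 𝔅 hull K) (hd : IsDoublingBasis μ 𝔅 hull η)
    (hη : 1 ≤ η) (hγ : K * (K * η) ^ ⌈K⌉₊ ≤ γ) : HasChainStep μ 𝔅 hull γ := by
  intro A hA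
  set m := ⌈K⌉₊
  have hK := hb.one_le hA
  obtain ⟨D, hD, hAD, hDμ, hDgrow⟩ := hb.exists_superset_measure_le_pow_mul hd hη hA m
  have hm : 1 ≤ m := Nat.one_le_iff_ne_zero.mpr (Nat.ceil_pos.mpr (by linarith)).ne'
  have hKm : ENNReal.ofReal K ≤ 2 ^ m := calc
    ENNReal.ofReal K ≤ ENNReal.ofReal m := ENNReal.ofReal_le_ofReal (Nat.le_ceil K)
    _ = (m : ℝ≥0∞) := ENNReal.ofReal_natCast m
    _ ≤ 2 ^ m := by exact_mod_cast Nat.lt_two_pow_self.le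
  have hDuniv : D = univ → hull D = univ := fun h =>
    univ_subset_iff.mp (h ▸ hb.subset_hull_self hD)
  refine ⟨hull D, hb.hull_mem D hD, ?_, ?_, ?_⟩
  · rcases hDgrow with hgrow | huniv
    · obtain ⟨x, hx⟩ := nonempty_of_measure_ne_zero (hb.measure_pos A hA).ne'
      refine hb.subset_hull D hD _ (hb.hull_mem A hA) ?_ ⟨x, hb.subset_hull_self hA hx, hAD hx⟩
      calc μ (hull A) ≤ ENNReal.ofReal K * μ A := hb.hull_measure A hA
        _ ≤ 2 ^ m * μ A := by gcongr
        _ ≤ 2 * μ D := hgrow.trans (le_mul_of_one_le_left zero_le one_le_two)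
    · rw [hDuniv huniv]
      exact subset_univ _
  · calc μ (hull D) ≤ ENNReal.ofReal K * μ D := hb.hull_measure D hD
      _ ≤ ENNReal.ofReal K * ((ENNReal.ofReal K * ENNReal.ofReal η) ^ m * μ A) := by gcongr
      _ = ENNReal.ofReal (K * (K * η) ^ m) * μ A := by
        rw [ENNReal.ofReal_mul (by linarith), ENNReal.ofReal_pow (by positivity),
          ENNReal.ofReal_mul (by linarith), mul_assoc]
      _ ≤ ENNReal.ofReal γ * μ A := by gcongr
  · rcases hDgrow with hgrow | huniv
    · left
      calc 2 * μ A ≤ 2 ^ m * μ A := by gcongr; exact le_self_pow₀ one_le_two (by omega)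
        _ ≤ μ D := hgrow
        _ ≤ μ (hull D) := measure_mono (hb.subset_hull_self hD)
    · exact Or.inr (hDuniv huniv)

lemma exists_superset_stopping {γ ρ : ℝ} (hb : IsBallBasis μ 𝔅 hull K)
    (hs : HasChainStep μ 𝔅 hull γ) (hρ : 0 < ρ) {U : Set X}
    (hU : μ U < ENNReal.ofReal ρ * μ univ) {C : Set X} (hC : C ∈ 𝔅)
    (hCU : ENNReal.ofReal ρ * μ C ≤ μ (U ∩ C)) :
    ∃ A ∈ 𝔅, C ⊆ A ∧ ENNReal.ofReal ρ * μ A ≤ μ (U ∩ A) ∧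
      μ (U ∩ hull A) ≤ ENNReal.ofReal (ρ * γ) * μ A := by
  by_contra! hnone
  -- Without a stopping ball, the chain started at `C` stays dense in `U` while it grows forever.
  have hdense : ∀ n : ℕ, ∃ D ∈ 𝔅, C ⊆ D ∧ ENNReal.ofReal ρ * μ D ≤ μ (U ∩ D) ∧
      (2 ^ n * μ C ≤ μ D ∨ D = univ) := by
    intro n
    induction n with
    | zero => exact ⟨C, hC, subset_rfl, hCU, Or.inl (by simp)⟩
    | succ n ih =>
      obtain ⟨D, hD, hCD, hDU, hDgrow⟩ := ih
      obtain ⟨D', hD', hhD', hD'μ, hD'grow⟩ := hs D hD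
      have hDD' := (hb.subset_hull_self hD).trans hhD'
      refine ⟨D', hD', hCD.trans hDD', ?_, ?_⟩
      · by_contra! hsparse
        refine (hnone D hD hCD hDU).not_ge ?_
        calc μ (U ∩ hull D) ≤ μ (U ∩ D') := measure_mono (inter_subset_inter_right _ hhD')
          _ ≤ ENNReal.ofReal ρ * (ENNReal.ofReal γ * μ D) := hsparse.le.trans (by gcongr)
          _ = ENNReal.ofReal (ρ * γ) * μ D := by rw [ENNReal.ofReal_mul hρ.le, mul_assoc]
      · rcases hD'grow with h2D | huniv
        · rcases hDgrow with hgrow | rfl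
          · left
            calc 2 ^ (n + 1) * μ C = 2 * (2 ^ n * μ C) := by ring
              _ ≤ 2 * μ D := by gcongr
              _ ≤ μ D' := h2D
          · exact Or.inr (univ_subset_iff.mp hDD')
        · exact Or.inr huniv
  have hρC : ENNReal.ofReal ρ * μ C ≠ 0 :=
    mul_ne_zero (ENNReal.ofReal_pos.mpr hρ).ne' (hb.measure_pos C hC).ne'
  obtain ⟨n, hn⟩ := ENNReal.exists_nat_mul_gt hρC (ne_top_of_lt hU)
  obtain ⟨D, -, -, hDU, hDgrow⟩ := hdense n
  have hD : ENNReal.ofReal ρ * μ D ≤ μ U := hDU.trans (measure_mono inter_subset_left)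
  rcases hDgrow with hgrow | rfl
  · refine hn.not_ge (le_trans ?_ hD)
    calc (n : ℝ≥0∞) * (ENNReal.ofReal ρ * μ C) ≤ 2 ^ n * (ENNReal.ofReal ρ * μ C) := by
          gcongr; exact_mod_cast Nat.lt_two_pow_self.le
      _ = ENNReal.ofReal ρ * (2 ^ n * μ C) := by ring
      _ ≤ ENNReal.ofReal ρ * μ D := by gcongr
  · exact hU.not_ge hD

lemma exists_calderonZygmund {γ ρ : ℝ} (hb : IsBallBasis μ 𝔅 hull K)
    (hs : HasChainStep μ 𝔅 hull γ) (hρ : 0 < ρ) (hρK : ρ * (4 * K) ≤ 1) {B U : Set X}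
    (hB : B ∈ 𝔅) (hUB : U ⊆ B) (hU : μ U < ENNReal.ofReal ρ * μ B) :
    ∃ 𝒢 ⊆ 𝔅, 𝒢.Countable ∧ 𝒢.Pairwise Disjoint ∧ μ (U \ ⋃ G ∈ 𝒢, hull G) = 0 ∧
      ∀ G ∈ 𝒢, (G ∩ B).Nonempty ∧ μ G ≤ μ B ∧ ENNReal.ofReal ρ * μ G ≤ μ (U ∩ G) ∧
        μ (U ∩ hull G) ≤ ENNReal.ofReal (ρ * γ) * μ G := by
  set F := {A | A ∈ 𝔅 ∧ ENNReal.ofReal ρ * μ A ≤ μ (U ∩ A) ∧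
    μ (U ∩ hull A) ≤ ENNReal.ofReal (ρ * γ) * μ A}
  have hFB : ∀ A ∈ F, (A ∩ B).Nonempty ∧ μ A ≤ μ B := by
    rintro A ⟨hA, hAU, -⟩
    have hρ' := (ENNReal.ofReal_pos.mpr hρ).ne'
    constructor
    · have hUA : μ (U ∩ A) ≠ 0 :=
        ((ENNReal.mul_pos hρ' (hb.measure_pos A hA).ne').trans_le hAU).ne'
      obtain ⟨y, hyU, hyA⟩ := nonempty_of_measure_ne_zero hUA
      exact ⟨y, hyA, hUB hyU⟩
    · refine (ENNReal.mul_le_mul_iff_right hρ' ENNReal.ofReal_ne_top).mp ?_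
      exact hAU.trans ((measure_mono inter_subset_left).trans hU.le)
  obtain ⟨𝒢, h𝒢F, h𝒢c, h𝒢d, hcov⟩ := hb.exists_countable_disjoint_subfamily (F := F)
    (fun A hA => hA.1) (hb.measure_lt_top _ (hb.hull_mem B hB)).ne fun A hA =>
      hb.subset_hull B hB A hA.1 ((hFB A hA).2.trans (le_mul_of_one_le_left zero_le one_le_two))
        (hFB A hA).1
  refine ⟨𝒢, fun G hG => (h𝒢F hG).1, h𝒢c, h𝒢d, ?_, fun G hG =>
    ⟨(hFB G (h𝒢F hG)).1, (hFB G (h𝒢F hG)).2, (h𝒢F hG).2.1, (h𝒢F hG).2.2⟩⟩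
  refine measure_mono_null (t := {x ∈ U | ∀ C ∈ 𝔅, x ∈ C → μ (U ∩ C) < ENNReal.ofReal ρ * μ C})
    ?_ (hb.measure_eq_zero_of_forall_measure_inter_lt hρ.le hρK (fun x hx => hx.1)
      (ne_top_of_le_ne_top (ne_top_of_lt hU) (measure_mono fun x hx => hx.1)) fun x hx => hx.2)
  rintro x ⟨hxU, hx⟩
  refine ⟨hxU, fun C hC hxC => ?_⟩
  by_contra! hCU
  obtain ⟨A, hA, hCA, hAU, hAhull⟩ := hb.exists_superset_stopping hs hρ
    (hU.trans_le (by gcongr; exact subset_univ B)) hC hCU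
  obtain ⟨G, hG, hAG⟩ := hcov A ⟨hA, hAU, hAhull⟩
  exact hx (mem_biUnion hG (hAG (hCA hxC)))

theorem measure_superlevel_le {γ θ ρ α ε : ℝ} (hb : IsBallBasis μ 𝔅 hull K)
    (hr : IsRegularBasis μ 𝔅 hull θ) (hs : HasChainStep μ 𝔅 hull γ) (hρ : 0 < ρ)
    (hρK : ρ * (4 * K) ≤ 1) (hργ : ρ * γ ≤ θ / 2) (hθ : 0 ≤ θ) (hα : 1 - θ / 2 ≤ α)
    (hα0 : 0 ≤ α) (hαε : (1 - α) * K ≤ ε * ρ) {B : Set X} (hB : B ∈ 𝔅) {g : X → ℝ}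
    {lam t : ℝ} (hsmall : μ {x ∈ B | lam < |g x|} < ENNReal.ofReal ρ * μ B)
    (hosc : ∀ H ∈ 𝔅, oscBeta μ g H α < ENNReal.ofReal t) :
    μ {x ∈ B | lam + t < |g x|} ≤ ENNReal.ofReal ε * μ {x ∈ B | lam < |g x|} := by
  set S := {x ∈ B | lam < |g x|}
  set S' := {x ∈ B | lam + t < |g x|}
  have ht : 0 < t := ENNReal.ofReal_pos.mp (zero_le.trans_lt (hosc B hB))
  have hS' : S' ⊆ S := fun x hx => ⟨hx.1, by linarith [hx.2]⟩
  obtain ⟨𝒢, h𝒢𝔅, h𝒢c, h𝒢d, hnull, h𝒢⟩ :=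
    hb.exists_calderonZygmund hs hρ hρK hB (sep_subset _ _) hsmall
  have h𝒢m : ∀ G ∈ 𝒢, MeasurableSet G := fun G hG => hb.measurableSet G (h𝒢𝔅 hG)
  have hlocal : ∀ G ∈ 𝒢, μ (S' ∩ hull G) ≤ ENNReal.ofReal ((1 - α) * K) * μ G := by
    intro G hG
    obtain ⟨hGB, hGμ, -, hGsparse⟩ := h𝒢 G hG
    have hH := hb.hull_mem G (h𝒢𝔅 hG)
    obtain ⟨E, hE, hEH, hEμ, hEosc⟩ := exists_subset_of_oscBeta_lt (hosc _ hH)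
    have hsparse : μ (S ∩ hull G) ≤ ENNReal.ofReal (θ / 2) * μ (hull G) := by
      refine hGsparse.trans ?_
      gcongr
      exact hb.subset_hull_self (h𝒢𝔅 hG)
    calc μ (S' ∩ hull G) ≤ ENNReal.ofReal (1 - α) * μ (hull G) :=
          measure_superlevel_inter_le (hb.measure_lt_top _ hH).ne hθ hα hα0
            (hr B hB G (h𝒢𝔅 hG) hGμ hGB) hsparse hE hEH hEμ hEosc
      _ ≤ ENNReal.ofReal (1 - α) * (ENNReal.ofReal K * μ G) := by
        gcongr
        exact hb.hull_measure G (h𝒢𝔅 hG)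
      _ = ENNReal.ofReal ((1 - α) * K) * μ G := by
        rw [ENNReal.ofReal_mul' (by linarith [hb.one_le hB]), mul_assoc]
  calc μ S' ≤ μ (S' ∩ ⋃ G ∈ 𝒢, hull G) + μ (S' \ ⋃ G ∈ 𝒢, hull G) :=
        measure_le_inter_add_sdiff μ S' _
    _ = μ (S' ∩ ⋃ G ∈ 𝒢, hull G) := by
      rw [measure_mono_null (sdiff_subset_sdiff_left hS') hnull, add_zero]
    _ ≤ ENNReal.ofReal ((1 - α) * K) * μ (⋃₀ 𝒢) := measure_inter_biUnion_le h𝒢c h𝒢d h𝒢m hlocal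
    _ ≤ ENNReal.ofReal ε * (ENNReal.ofReal ρ * μ (⋃₀ 𝒢)) := by
      rw [← mul_assoc, ← ENNReal.ofReal_mul' hρ.le]
      gcongr
    _ ≤ ENNReal.ofReal ε * μ (S ∩ ⋃₀ 𝒢) := by
      gcongr
      exact mul_measure_sUnion_le h𝒢c h𝒢d h𝒢m fun G hG => (h𝒢 G hG).2.2.1
    _ ≤ ENNReal.ofReal ε * μ S := by gcongr; exact inter_subset_left


theorem good_lambda {γ θ ε : ℝ} (hb : IsBallBasis μ 𝔅 hull K) (hr : IsRegularBasis μ 𝔅 hull θ)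
    (hs : HasChainStep μ 𝔅 hull γ) (hKγ : K ≤ γ) (hθ : 0 < θ) (hθ1 : θ < 1) (hε1 : ε < 1)
    {B : Set X} (hB : B ∈ 𝔅) {g : X → ℝ} {lam t : ℝ}
    (hsmall : μ {x ∈ B | lam < |g x|} ≤ ENNReal.ofReal (θ / (5 * K * γ ^ 2)) * μ B)
    (hosc : ∀ H ∈ 𝔅, oscBeta μ g H (1 - ε * θ / (4 * γ ^ 2 * K)) < ENNReal.ofReal t) :
    μ {x ∈ B | lam + t < |g x|} ≤ ENNReal.ofReal ε * μ {x ∈ B | lam < |g x|} := by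
  have hK := hb.one_le hB
  have hK0 : 0 < K := by linarith
  have hγ0 : 0 < γ := by linarith
  have hγK : 1 ≤ γ ^ 2 * K := by nlinarith
  have h1α : (1 - (1 - ε * θ / (4 * γ ^ 2 * K))) * K = ε * (θ / (4 * γ ^ 2)) := by
    field_simp
    ring
  have hαθ : ε * θ / (4 * γ ^ 2 * K) ≤ θ / 2 := by
    rw [div_le_div_iff₀ (by positivity) two_pos]
    nlinarith [mul_le_mul_of_nonneg_left hγK hθ.le, mul_lt_mul_of_pos_left hε1 hθ]
  have hρK : θ / (4 * γ ^ 2) * (4 * K) ≤ 1 := by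
    rw [div_mul_eq_mul_div, div_le_one (by positivity)]
    nlinarith
  have hργ : θ / (4 * γ ^ 2) * γ ≤ θ / 2 := by
    rw [div_mul_eq_mul_div, div_le_div_iff₀ (by positivity) two_pos]
    nlinarith [mul_le_mul_of_nonneg_left (show γ * 2 ≤ 4 * γ ^ 2 by nlinarith) hθ.le]
  have hρB : ENNReal.ofReal (θ / (5 * K * γ ^ 2)) < ENNReal.ofReal (θ / (4 * γ ^ 2)) := by
    rw [ENNReal.ofReal_lt_ofReal_iff (by positivity),
      div_lt_div_iff₀ (by positivity) (by positivity)]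
    nlinarith [mul_pos hθ (show 0 < γ ^ 2 by positivity)]
  refine hb.measure_superlevel_le hr hs (by positivity) hρK hργ hθ.le (by linarith)
    (by linarith) h1α.le hB (hsmall.trans_lt ?_) hosc
  exact (ENNReal.mul_lt_mul_iff_left (hb.measure_pos B hB).ne' (hb.measure_lt_top B hB).ne).mpr hρB

end IsBallBasis

theorem good_lambda_bmoAlpha_general
    (K η θ : ℝ) (hη : 2 < η) (hθ : 0 < θ) (hθ1 : θ < 1) :
    ∃ γ : ℝ, 2 < γ ∧
      ∀ (X : Type) (_ : MeasurableSpace X) (μ : Measure X)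
        (𝔅 : Set (Set X)) (hull : Set X → Set X),
        IsBallBasis μ 𝔅 hull K →
        IsDoublingBasis μ 𝔅 hull η →
        IsRegularBasis μ 𝔅 hull θ →
        ∀ ε : ℝ, 0 < ε → ε < 1 →
          ∀ g : X → ℝ,
            (⨆ (B : Set X) (_ : B ∈ 𝔅), oscBeta μ g B (1 - ε * θ / (4 * γ ^ 2 * K))) ≠ ∞ →
            ∀ B ∈ 𝔅, ∀ lam : ℝ, 0 < lam →
              μ {x ∈ B | lam < |g x|} ≤ ENNReal.ofReal (θ / (5 * K * γ ^ 2)) * μ B →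
              μ {x ∈ B |
                  lam + (⨆ (B' : Set X) (_ : B' ∈ 𝔅),
                    oscBeta μ g B' (1 - ε * θ / (4 * γ ^ 2 * K))).toReal < |g x|} ≤
                ENNReal.ofReal ε * μ {x ∈ B | lam < |g x|} := by
  set γ := max 3 (K * (K * η) ^ ⌈K⌉₊)
  refine ⟨γ, lt_max_of_lt_left (by norm_num), ?_⟩
  intro X _ μ 𝔅 hull hb hd hr ε _ hε1 g hM B hB lam _ hsmall
  set M := ⨆ (B' : Set X) (_ : B' ∈ 𝔅), oscBeta μ g B' (1 - ε * θ / (4 * γ ^ 2 * K))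
  have hKγ : K ≤ γ := by
    have hK := hb.one_le hB
    refine le_max_of_le_right (le_mul_of_one_le_right (by linarith) (one_le_pow₀ ?_))
    nlinarith
  refine measure_setOf_lt_le_of_forall_pos fun δ hδ => ?_
  rw [add_assoc]
  refine hb.good_lambda hr (hb.hasChainStep hd (by linarith) (le_max_right _ _)) hKγ hθ hθ1 hε1 hB
    hsmall fun H hH => ?_
  calc oscBeta μ g H _ ≤ M := le_iSup₂ (f := fun B' (_ : B' ∈ 𝔅) => oscBeta μ g B' _) H hH
    _ < ENNReal.ofReal (M.toReal + δ) := by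
      rw [ENNReal.ofReal_add ENNReal.toReal_nonneg hδ.le, ENNReal.ofReal_toReal hM]
      exact ENNReal.lt_add_right hM (ENNReal.ofReal_pos.mpr hδ).ne'

theorem good_lambda_bmoAlpha
    (K η θ : ℝ) (hK : 0 < K) (hη : 2 < η) (hθ : 0 < θ) (hθ1 : θ < 1) :
    ∃ γ : ℝ, 2 < γ ∧
      ∀ (X : Type) (_ : MeasurableSpace X) (μ : Measure X)
        (𝔅 : Set (Set X)) (hull : Set X → Set X),
        IsBallBasis μ 𝔅 hull K →
        IsDoublingBasis μ 𝔅 hull η →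
        IsRegularBasis μ 𝔅 hull θ →
        ∀ ε : ℝ, 0 < ε → ε < 1 →
          ∀ g : X → ℝ,
            (⨆ (B : Set X) (_ : B ∈ 𝔅), oscBeta μ g B (1 - ε * θ / (4 * γ ^ 2 * K))) ≠ ∞ →
            ∀ B ∈ 𝔅, ∀ lam : ℝ, 0 < lam →
              μ {x ∈ B | lam < |g x|} ≤ ENNReal.ofReal (θ / (5 * K * γ ^ 2)) * μ B →
              μ {x ∈ B |
                  lam + (⨆ (B' : Set X) (_ : B' ∈ 𝔅),
                    oscBeta μ g B' (1 - ε * θ / (4 * γ ^ 2 * K))).toReal < |g x|} ≤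
                ENNReal.ofReal ε * μ {x ∈ B | lam < |g x|} :=
  good_lambda_bmoAlpha_general K η θ hη hθ hθ1
end

section
/- Let (X, 𝓜, μ) be a measure space equipped with a ball-basis 𝔅. Then 𝔅 satisfies the density property: for every measurable set E ∈ 𝓜, the set of points x ∈ E that are not density points of E has outer measure zero, i.e. μ*({x ∈ E : x is not a density point of E}) = 0. Here x ∈ E is a density point of E if for every ε > 0 there exists a ball B ∈ 𝔅 with x ∈ B and μ(B ∩ E) > (1 − ε) μ(B). -/
open MeasureTheory Set
open scoped ENNReal NNReal symmDiff

variable {X : Type*}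

/-- `x` is a density point of `E` with respect to the ball-basis `𝔅`. -/
def IsDensityPoint {X : Type*} [MeasurableSpace X] (μ : Measure X) (𝔅 : Set (Set X))
    (E : Set X) (x : X) : Prop :=
  ∀ ε : ℝ, 0 < ε → ∃ B ∈ 𝔅, x ∈ B ∧ ENNReal.ofReal (1 - ε) * μ B < μ (B ∩ E)

/-! Every non-density point of `E` lies, for some `ε = 1 / (n + 1)`, in the set `A` of points of
`E` all of whose balls lose at least an `ε`-fraction of their measure to the complement of `E`.
Approximate a measurable envelope `G ⊆ E` of `A` by a countable union of balls up to `δ`. The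
balls of the approximation that meet `A` have measure at most `δ / ε`, so a Vitali selection
gives a disjoint subfamily whose hulls cover them all. Each selected ball lies outside `G` on an
`ε`-fraction of itself, and these disjoint pieces lie in the `δ`-small error of the
approximation. Hence `ε μ(A) ≤ (ε + K) δ` for every `δ > 0`. -/

def lowDensityPoints [MeasurableSpace X] (μ : Measure X) (𝔅 : Set (Set X)) (E : Set X)
    (ε : ℝ≥0∞) : Set X :=
  {x ∈ E | ∀ B ∈ 𝔅, x ∈ B → ε * μ B ≤ μ (B \ E)}

theorem ofReal_mul_le_measure_sdiff_of_measure_inter_le [MeasurableSpace X] {μ : Measure X}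
    {B E : Set X} {δ : ℝ} (hδ₀ : 0 ≤ δ) (hδ₁ : δ ≤ 1) (hB : μ B ≠ ∞)
    (h : μ (B ∩ E) ≤ ENNReal.ofReal (1 - δ) * μ B) :
    ENNReal.ofReal δ * μ B ≤ μ (B \ E) := by
  have hsplit : ENNReal.ofReal δ * μ B + ENNReal.ofReal (1 - δ) * μ B = μ B := by
    rw [← add_mul, ← ENNReal.ofReal_add hδ₀ (by linarith)]
    simp
  calc ENNReal.ofReal δ * μ B = μ B - ENNReal.ofReal (1 - δ) * μ B :=
        ENNReal.eq_sub_of_add_eq (ENNReal.mul_ne_top ENNReal.ofReal_ne_top hB) hsplit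
    _ ≤ μ B - μ (B ∩ E) := tsub_le_tsub_left h _
    _ ≤ μ (B \ (B ∩ E)) := le_measure_sdiff
    _ = μ (B \ E) := by rw [sdiff_self_inter]

theorem setOf_not_isDensityPoint_subset_iUnion_lowDensityPoints [MeasurableSpace X]
    {μ : Measure X} {𝔅 : Set (Set X)} (h𝔅 : ∀ B ∈ 𝔅, μ B < ∞) (E : Set X) :
    {x ∈ E | ¬ IsDensityPoint μ 𝔅 E x} ⊆
      ⋃ n : ℕ, lowDensityPoints μ 𝔅 E (ENNReal.ofReal (1 / (n + 1))) := by
  rintro x ⟨hxE, hx⟩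
  simp only [IsDensityPoint, not_forall, not_exists, not_and, not_lt, exists_prop] at hx
  obtain ⟨ε, hε, hεB⟩ := hx
  obtain ⟨n, hn⟩ := exists_nat_one_div_lt hε
  refine mem_iUnion.mpr ⟨n, hxE, fun B hB hxB => ?_⟩
  refine ofReal_mul_le_measure_sdiff_of_measure_inter_le (by positivity) ?_ (h𝔅 B hB).ne
    ((hεB B hB hxB).trans (by gcongr))
  rw [div_le_one (by positivity)]
  linarith [n.cast_nonneg (α := ℝ)]

namespace IsBallBasis

variable [MeasurableSpace X] {μ : Measure X} {𝔅 : Set (Set X)} {hull : Set X → Set X} {K : ℝ}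

theorem exists_pairwiseDisjoint_subset_hull (hbasis : IsBallBasis μ 𝔅 hull K)
    {t : Set (Set X)} (ht : t ⊆ 𝔅) {R : ℝ≥0∞} (hR : R ≠ ∞) (htR : ∀ B ∈ t, μ B ≤ R) :
    ∃ u ⊆ t, u.PairwiseDisjoint id ∧ ∀ A ∈ t, ∃ B ∈ u, A ⊆ hull B := by
  obtain ⟨u, hut, hdisj, hcover⟩ :=
    Vitali.exists_disjoint_subfamily_covering_enlargement id t (fun B => (μ B).toReal) 2
      one_lt_two (fun _ _ => ENNReal.toReal_nonneg) R.toReal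
      (fun B hB => ENNReal.toReal_mono hR (htR B hB))
      (fun B hB => nonempty_of_measure_ne_zero (hbasis.measure_pos B (ht hB)).ne')
  refine ⟨u, hut, hdisj, fun A hA => ?_⟩
  obtain ⟨B, hBu, hAB, hle⟩ := hcover A hA
  refine ⟨B, hBu, hbasis.subset_hull B (ht (hut hBu)) A (ht hA) ?_ hAB⟩
  have hBfin := (hbasis.measure_lt_top B (ht (hut hBu))).ne
  rw [← ENNReal.toReal_le_toReal (hbasis.measure_lt_top A (ht hA)).ne
    (ENNReal.mul_ne_top ENNReal.ofNat_ne_top hBfin), ENNReal.toReal_mul]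
  exact_mod_cast hle

theorem measure_biUnion_hull_le (hbasis : IsBallBasis μ 𝔅 hull K) {u : Set (Set X)}
    (hu : u ⊆ 𝔅) (huc : u.Countable) :
    μ (⋃ B ∈ u, hull B) ≤ ENNReal.ofReal K * ∑' B : u, μ B :=
  calc μ (⋃ B ∈ u, hull B) ≤ ∑' B : u, μ (hull B) := measure_biUnion_le μ huc _
    _ ≤ ∑' B : u, ENNReal.ofReal K * μ B :=
        ENNReal.tsum_le_tsum fun B => hbasis.hull_measure B (hu B.2)
    _ = ENNReal.ofReal K * ∑' B : u, μ B := ENNReal.tsum_mul_left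

theorem mul_measure_sUnion_le (hbasis : IsBallBasis μ 𝔅 hull K) {t : Set (Set X)}
    (ht : t ⊆ 𝔅) (htc : t.Countable) {G : Set X} (hG : MeasurableSet G) {ε : ℝ≥0∞}
    (hε : ε ≠ 0) (hfin : μ (⋃₀ t \ G) ≠ ∞) (hthin : ∀ B ∈ t, ε * μ B ≤ μ (B \ G)) :
    ε * μ (⋃₀ t) ≤ ENNReal.ofReal K * μ (⋃₀ t \ G) := by
  have hbound : ∀ B ∈ t, μ B ≤ μ (⋃₀ t \ G) / ε := fun B hB => by
    rw [ENNReal.le_div_iff_mul_le (Or.inl hε) (Or.inr hfin), mul_comm]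
    exact (hthin B hB).trans (measure_mono (sdiff_subset_sdiff_left (subset_sUnion_of_mem hB)))
  obtain ⟨u, hut, hdisj, hcover⟩ :=
    hbasis.exists_pairwiseDisjoint_subset_hull ht (ENNReal.div_ne_top hfin hε) hbound
  have hcover' : ⋃₀ t ⊆ ⋃ B ∈ u, hull B := sUnion_subset fun A hA => by
    obtain ⟨B, hBu, hAB⟩ := hcover A hA
    exact hAB.trans (subset_biUnion_of_mem hBu)
  have huc : u.Countable := htc.mono hut
  calc ε * μ (⋃₀ t) ≤ ε * (ENNReal.ofReal K * ∑' B : u, μ B) :=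
        mul_le_mul_right ((measure_mono hcover').trans
          (hbasis.measure_biUnion_hull_le (hut.trans ht) huc)) ε
    _ = ENNReal.ofReal K * ∑' B : u, ε * μ B := by rw [ENNReal.tsum_mul_left, mul_left_comm]
    _ ≤ ENNReal.ofReal K * ∑' B : u, μ (B \ G) := by
        gcongr with B
        exact hthin B (hut B.2)
    _ = ENNReal.ofReal K * μ (⋃ B ∈ u, B \ G) := by
        rw [measure_biUnion (f := fun B => B \ G) huc
          (hdisj.mono fun B => (sdiff_subset : B \ G ⊆ B))
          fun B hB => (hbasis.measurableSet B (ht (hut hB))).diff hG]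
    _ ≤ ENNReal.ofReal K * μ (⋃₀ t \ G) := by
        gcongr
        exact iUnion₂_subset fun B hB => sdiff_subset_sdiff_left (subset_sUnion_of_mem (hut hB))

theorem mul_measure_lowDensityPoints_le (hbasis : IsBallBasis μ 𝔅 hull K) {E : Set X}
    (hE : MeasurableSet E) {ε : ℝ≥0∞} (hε : ε ≠ 0) {δ : ℝ≥0∞} (hδ : 0 < δ) :
    ε * μ (lowDensityPoints μ 𝔅 E ε) ≤ (ε + ENNReal.ofReal K) * δ := by
  set A := lowDensityPoints μ 𝔅 E ε
  set G := toMeasurable μ A ∩ E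
  have hG : MeasurableSet G := (measurableSet_toMeasurable μ A).inter hE
  obtain ⟨𝒞, h𝒞𝔅, h𝒞c, h𝒞⟩ := hbasis.approx G hG δ hδ
  set t := {B ∈ 𝒞 | (B ∩ A).Nonempty}
  have hGU : μ (G \ ⋃₀ 𝒞) ≤ δ :=
    (measure_mono (by rw [symmDiff_def]; exact le_sup_left)).trans h𝒞.le
  have htG : μ (⋃₀ t \ G) ≤ μ (G ∆ ⋃₀ 𝒞) := measure_mono <|
    (sdiff_subset_sdiff_left (sUnion_mono fun B hB => hB.1)).trans
      (by rw [symmDiff_def]; exact le_sup_right)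
  have hcover : A ⊆ (G \ ⋃₀ 𝒞) ∪ ⋃₀ t := fun x hx => by
    by_cases hxU : x ∈ ⋃₀ 𝒞
    · obtain ⟨B, hB, hxB⟩ := hxU
      exact Or.inr ⟨B, ⟨hB, x, hxB, hx⟩, hxB⟩
    · exact Or.inl ⟨⟨subset_toMeasurable μ A hx, hx.1⟩, hxU⟩
  have hthin : ∀ B ∈ t, ε * μ B ≤ μ (B \ G) := fun B ⟨hB, x, hxB, hxA⟩ =>
    (hxA.2 B (h𝒞𝔅 hB) hxB).trans (measure_mono (sdiff_subset_sdiff_right inter_subset_right))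
  calc ε * μ A ≤ ε * μ (G \ ⋃₀ 𝒞) + ε * μ (⋃₀ t) := by
        rw [← mul_add]
        gcongr
        exact (measure_mono hcover).trans (measure_union_le _ _)
    _ ≤ ε * δ + ENNReal.ofReal K * δ := by
        refine add_le_add (by gcongr) ?_
        refine (hbasis.mul_measure_sUnion_le (fun B hB => h𝒞𝔅 hB.1) (h𝒞c.mono fun B hB => hB.1)
          hG hε (ne_top_of_le_ne_top h𝒞.ne_top htG) hthin).trans ?_
        gcongr
        exact htG.trans h𝒞.le
    _ = (ε + ENNReal.ofReal K) * δ := (add_mul _ _ _).symm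

theorem measure_lowDensityPoints_eq_zero (hbasis : IsBallBasis μ 𝔅 hull K) {E : Set X}
    (hE : MeasurableSet E) {ε : ℝ≥0∞} (hε₀ : ε ≠ 0) (hε : ε ≠ ∞) :
    μ (lowDensityPoints μ 𝔅 E ε) = 0 := by
  have hC : ε + ENNReal.ofReal K ≠ 0 := by simp [hε₀]
  have hC' : ε + ENNReal.ofReal K ≠ ∞ := ENNReal.add_ne_top.mpr ⟨hε, ENNReal.ofReal_ne_top⟩
  have hsmall : ε * μ (lowDensityPoints μ 𝔅 E ε) = 0 := by
    refine nonpos_iff_eq_zero.mp (ENNReal.le_of_forall_pos_le_add fun η hη _ => ?_)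
    rw [zero_add, ← ENNReal.mul_div_cancel hC hC' (b := (η : ℝ≥0∞))]
    exact hbasis.mul_measure_lowDensityPoints_le hE hε₀
      (ENNReal.div_pos (by exact_mod_cast hη.ne') hC')
  exact (mul_eq_zero.mp hsmall).resolve_left hε₀

end IsBallBasis

theorem density_property_general
    {X : Type*} [MeasurableSpace X] (μ : Measure X) (𝔅 : Set (Set X))
    (hull : Set X → Set X) (K : ℝ)
    (hbasis : IsBallBasis μ 𝔅 hull K)
    (E : Set X) (hE : MeasurableSet E) :
    μ {x ∈ E | ¬ IsDensityPoint μ 𝔅 E x} = 0 :=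
  measure_mono_null
    (setOf_not_isDensityPoint_subset_iUnion_lowDensityPoints hbasis.measure_lt_top E)
    (measure_iUnion_null fun _ => hbasis.measure_lowDensityPoints_eq_zero hE
      (ENNReal.ofReal_pos.mpr (by positivity)).ne' ENNReal.ofReal_ne_top)

theorem density_property
    {X : Type*} [MeasurableSpace X] (μ : Measure X) (𝔅 : Set (Set X))
    (hull : Set X → Set X) (K : ℝ) (hK : 0 < K)
    (hbasis : IsBallBasis μ 𝔅 hull K)
    (E : Set X) (hE : MeasurableSet E) :
    μ {x ∈ E | ¬ IsDensityPoint μ 𝔅 E x} = 0 :=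
  density_property_general μ 𝔅 hull K hbasis E hE
end

section
/- Let (X, 𝓜, μ) be a measure space equipped with a ball-basis 𝔅 and fix 1 ≤ r < ∞. Then there is an admissible constant c such that for every f ∈ L^r_loc(X) and all balls A, B ∈ 𝔅 with A ∩ B ≠ ∅ and μ(A) ≤ μ(B), one has |f_A − f_B| ≤ c · (μ(B)/μ(A))^{1/r} · ⟨f⟩*_{#,A}. -/
open MeasureTheory Set
open scoped ENNReal NNReal symmDiff

variable {X : Type*}

/-- membership in `L^r_loc(X)`. -/
def MemLrLoc [MeasurableSpace X] (μ : Measure X) (𝔅 : Set (Set X)) (r : ℝ) (f : X → ℝ) : Prop :=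
  AEMeasurable f μ ∧ ∀ B ∈ 𝔅, (∫⁻ x in B, ENNReal.ofReal |f x| ^ r ∂μ) < ∞

/-!
Let `C` be the hull-ball of `B`; it contains both `A` and `B` and has measure at most `K μ(B)`.
For a ball `D ⊆ C`, Jensen's inequality on `D` followed by enlarging the domain of integration
to `C` gives `|f_D - f_C| ≤ (μ(C)/μ(D))^{1/r} ⟨f⟩_{#,C}`. Applying this to `D = A` and `D = B`,
the triangle inequality yields the bound with `c = 2 K^{1/r}`, since `⟨f⟩_{#,C} ≤ ⟨f⟩*_{#,A}`.
-/

namespace MeasureTheory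

variable [MeasurableSpace X] {μ : Measure X}

theorem enorm_average_le_laverage_enorm {E : Type*} [NormedAddCommGroup E] [NormedSpace ℝ E]
    (f : X → E) : ‖⨍ x, f x ∂μ‖ₑ ≤ ⨍⁻ x, ‖f x‖ₑ ∂μ := by
  rw [average_eq', laverage_eq']
  exact enorm_integral_le_lintegral_enorm _

theorem laverage_le_laverage_rpow_rpow {r : ℝ} (hr : 1 ≤ r) {g : X → ℝ≥0∞}
    (hg : AEMeasurable g μ) : ⨍⁻ x, g x ∂μ ≤ (⨍⁻ x, g x ^ r ∂μ) ^ (1 / r) := by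
  have holder := eLpNorm'_le_eLpNorm'_mul_rpow_measure_univ one_pos hr
    (hg.smul_measure (μ univ)⁻¹).aestronglyMeasurable
  -- the normalized measure has mass `≤ 1` even when `μ univ` is `0` or `∞`
  have hvol : ((μ univ)⁻¹ • μ) univ ^ (1 - 1 / r) ≤ 1 :=
    ENNReal.rpow_le_one (by simp) (by simpa using inv_le_one_of_one_le₀ hr)
  simp only [eLpNorm'_eq_lintegral_enorm, enorm_eq_self, ENNReal.rpow_one, div_one] at holder
  exact holder.trans (mul_le_of_le_one_right' hvol)

theorem setLAverage_le_mul_setLAverage_of_subset {s t : Set X} (hst : s ⊆ t) (ht₀ : μ t ≠ 0)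
    (ht : μ t ≠ ∞) (g : X → ℝ≥0∞) :
    ⨍⁻ x in s, g x ∂μ ≤ μ t / μ s * ⨍⁻ x in t, g x ∂μ := by
  rw [setLAverage_eq, setLAverage_eq, mul_comm, ← mul_div_assoc,
    ENNReal.div_mul_cancel ht₀ ht]
  gcongr

theorem integrableOn_of_lintegral_rpow_lt_top {r : ℝ} (hr : 1 ≤ r) {f : X → ℝ} {s : Set X}
    (hf : AEMeasurable f μ) (hs : μ s ≠ ∞)
    (hfs : ∫⁻ x in s, ENNReal.ofReal |f x| ^ r ∂μ < ∞) : IntegrableOn f s μ := by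
  have : IsFiniteMeasure (μ.restrict s) := isFiniteMeasure_restrict.2 hs
  refine MemLp.integrable (q := ENNReal.ofReal r) (by simpa using hr)
    ⟨hf.aestronglyMeasurable.restrict, ?_⟩
  rw [eLpNorm_lt_top_iff_lintegral_rpow_enorm_lt_top (by simp; linarith)
    ENNReal.ofReal_ne_top, ENNReal.toReal_ofReal (by linarith)]
  simpa only [Real.enorm_eq_ofReal_abs] using hfs

theorem setAverage_sub_const {f : X → ℝ} {s : Set X} (hf : IntegrableOn f s μ)
    (hs₀ : μ s ≠ 0) (hs : μ s ≠ ∞) (c : ℝ) :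
    ⨍ x in s, (f x - c) ∂μ = ⨍ x in s, f x ∂μ - c := by
  have hreal : μ.real s ≠ 0 := ENNReal.toReal_ne_zero.2 ⟨hs₀, hs⟩
  rw [setAverage_eq, setAverage_eq, integral_sub hf (integrableOn_const hs), setIntegral_const,
    smul_sub, inv_smul_smul₀ hreal]

end MeasureTheory

section Averages

variable [MeasurableSpace X] {μ : Measure X} {r : ℝ} {f : X → ℝ} {s t : Set X}

theorem mean_eq_setAverage (μ : Measure X) (f : X → ℝ) (s : Set X) :
    mean μ f s = ⨍ x in s, f x ∂μ := by
  rw [mean, setAverage_eq, smul_eq_mul, div_eq_inv_mul, measureReal_def]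

theorem avgNorm_eq_setLAverage (μ : Measure X) (r : ℝ) (f : X → ℝ) (s : Set X) :
    avgNorm μ r f s = (⨍⁻ x in s, ENNReal.ofReal |f x| ^ r ∂μ) ^ (1 / r) := by
  rw [avgNorm, setLAverage_eq]

theorem ofReal_abs_setAverage_le_avgNorm (hr : 1 ≤ r) (hf : AEMeasurable f μ) (s : Set X) :
    ENNReal.ofReal |⨍ x in s, f x ∂μ| ≤ avgNorm μ r f s := by
  have h := (enorm_average_le_laverage_enorm (μ := μ.restrict s) f).trans
    (laverage_le_laverage_rpow_rpow hr hf.restrict.enorm)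
  simpa only [Real.enorm_eq_ofReal_abs, avgNorm_eq_setLAverage] using h

theorem avgNorm_le_of_subset (hr : 0 ≤ r) (hst : s ⊆ t) (ht₀ : μ t ≠ 0) (ht : μ t ≠ ∞) :
    avgNorm μ r f s ≤ (μ t / μ s) ^ (1 / r) * avgNorm μ r f t := by
  simp only [avgNorm_eq_setLAverage]
  rw [← ENNReal.mul_rpow_of_nonneg _ _ (by positivity)]
  gcongr
  exact setLAverage_le_mul_setLAverage_of_subset hst ht₀ ht _

theorem ofReal_abs_mean_sub_mean_le (hr : 1 ≤ r) (hf : AEMeasurable f μ) (hst : s ⊆ t)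
    (hs₀ : μ s ≠ 0) (ht₀ : μ t ≠ 0) (ht : μ t ≠ ∞)
    (hft : ∫⁻ x in t, ENNReal.ofReal |f x| ^ r ∂μ < ∞) :
    ENNReal.ofReal |mean μ f s - mean μ f t| ≤
      (μ t / μ s) ^ (1 / r) * sharpNorm μ r f t := by
  have hs : μ s ≠ ∞ := ne_top_of_le_ne_top ht (measure_mono hst)
  have hfs : IntegrableOn f s μ :=
    integrableOn_of_lintegral_rpow_lt_top hr hf hs <| (lintegral_mono_set hst).trans_lt hft
  calc ENNReal.ofReal |mean μ f s - mean μ f t|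
      = ENNReal.ofReal |⨍ x in s, (f x - mean μ f t) ∂μ| := by
        rw [setAverage_sub_const hfs hs₀ hs, mean_eq_setAverage μ f s]
    _ ≤ avgNorm μ r (fun x => f x - mean μ f t) s :=
        ofReal_abs_setAverage_le_avgNorm hr (hf.sub_const _) s
    _ ≤ (μ t / μ s) ^ (1 / r) * sharpNorm μ r f t :=
        avgNorm_le_of_subset (by linarith) hst ht₀ ht

end Averages

namespace IsBallBasis

variable [MeasurableSpace X] {μ : Measure X} {𝔅 : Set (Set X)}
  {hull : Set X → Set X} {K : ℝ}

theorem subset_hull_of_measure_le (h : IsBallBasis μ 𝔅 hull K) {A B : Set X} (hA : A ∈ 𝔅)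
    (hB : B ∈ 𝔅) (hAB : (A ∩ B).Nonempty) (hμ : μ A ≤ μ B) : A ⊆ hull B :=
  h.subset_hull B hB A hA (hμ.trans (le_mul_of_one_le_left zero_le one_le_two)) hAB

theorem self_subset_hull (h : IsBallBasis μ 𝔅 hull K) {B : Set X} (hB : B ∈ 𝔅) :
    B ⊆ hull B := by
  obtain ⟨x, hx⟩ := nonempty_of_measure_ne_zero (h.measure_pos B hB).ne'
  exact h.subset_hull_of_measure_le hB hB ⟨x, hx, hx⟩ le_rfl

theorem rpow_measure_hull_div_le (h : IsBallBasis μ 𝔅 hull K) {r : ℝ} (hr : 0 ≤ r)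
    {B : Set X} (hB : B ∈ 𝔅) (A : Set X) :
    (μ (hull B) / μ A) ^ (1 / r) ≤ ENNReal.ofReal K ^ (1 / r) * (μ B / μ A) ^ (1 / r) := by
  rw [← ENNReal.mul_rpow_of_nonneg _ _ (by positivity), ← mul_div_assoc]
  gcongr
  exact h.hull_measure B hB

end IsBallBasis

theorem mean_diff_bound (K r : ℝ) (hK : 0 < K) (hr : 1 ≤ r) :
    ∃ c : ℝ≥0∞, 0 < c ∧ c ≠ ∞ ∧
      ∀ (X : Type) (_ : MeasurableSpace X) (μ : Measure X)
        (𝔅 : Set (Set X)) (hull : Set X → Set X),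
        IsBallBasis μ 𝔅 hull K →
        ∀ f : X → ℝ, MemLrLoc μ 𝔅 r f →
          ∀ A ∈ 𝔅, ∀ B ∈ 𝔅, (A ∩ B).Nonempty → μ A ≤ μ B →
            ENNReal.ofReal |mean μ f A - mean μ f B| ≤
              c * (μ B / μ A) ^ (1 / r) * sharpStar μ 𝔅 r f A := by
  have hK' : ENNReal.ofReal K ^ (1 / r) ≠ 0 :=
    (ENNReal.rpow_pos (ENNReal.ofReal_pos.2 hK) ENNReal.ofReal_ne_top).ne'
  refine ⟨2 * ENNReal.ofReal K ^ (1 / r), ENNReal.mul_pos two_ne_zero hK', by finiteness, ?_⟩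
  intro X _ μ 𝔅 hull h𝔅 f hf A hA B hB hAB hμ
  set C := hull B
  have hC : C ∈ 𝔅 := h𝔅.hull_mem B hB
  have hAC : A ⊆ C := h𝔅.subset_hull_of_measure_le hA hB hAB hμ
  have mean_sub_mean_le {D : Set X} (hD : D ∈ 𝔅) (hDC : D ⊆ C) :=
    ofReal_abs_mean_sub_mean_le hr hf.1 hDC (h𝔅.measure_pos D hD).ne'
      (h𝔅.measure_pos C hC).ne' (h𝔅.measure_lt_top C hC).ne (hf.2 C hC)
  have hCB : (μ C / μ B) ^ (1 / r) ≤ (μ C / μ A) ^ (1 / r) := by gcongr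
  set S := sharpNorm μ r f C
  have hS : S ≤ sharpStar μ 𝔅 r f A := le_iSup₂_of_le C ⟨hC, hAC⟩ le_rfl
  calc ENNReal.ofReal |mean μ f A - mean μ f B|
      ≤ ENNReal.ofReal |mean μ f A - mean μ f C| +
          ENNReal.ofReal |mean μ f B - mean μ f C| := by
        simp only [← Real.dist_eq, ← edist_dist]
        exact edist_triangle_right _ _ _
    _ ≤ (μ C / μ A) ^ (1 / r) * S + (μ C / μ B) ^ (1 / r) * S :=
        add_le_add (mean_sub_mean_le hA hAC) (mean_sub_mean_le hB (h𝔅.self_subset_hull hB))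
    _ ≤ 2 * ((μ C / μ A) ^ (1 / r) * S) := by rw [two_mul]; gcongr
    _ ≤ 2 * (ENNReal.ofReal K ^ (1 / r) * (μ B / μ A) ^ (1 / r) * sharpStar μ 𝔅 r f A) := by
        gcongr
        exact h𝔅.rpow_measure_hull_div_le (by linarith) hB A
    _ = 2 * ENNReal.ofReal K ^ (1 / r) * (μ B / μ A) ^ (1 / r) * sharpStar μ 𝔅 r f A := by
        ring
end

section
/- Let (X, 𝓜, μ) be a measure space equipped with a ball-basis 𝔅, let f : X → ℝ be measurable and a.e. finite, let B ∈ 𝔅 and 0 < α < 1. Then there exists a measurable set E ⊆ B such that μ(E) ≥ α μ(B) and OSC_E(f) ≤ OSC_{B,α}(f). -/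
open MeasureTheory Set
open scoped ENNReal NNReal symmDiff

variable {X : Type*}

/-!
Let `L = OSC_{B,α}(f) < ∞` and take admissible sets `Eₙ ⊆ B` with `OSC_{Eₙ}(f) < cₙ → L`.
On `Eₙ` the function `f` takes a.e. values in an interval `[aₙ, aₙ + cₙ]` (start it at the
essential infimum). For the finite measure `ρ = f_*(μ|_B)` on `ℝ` this gives
`ρ [aₙ, aₙ + cₙ] > α μ(B)`. Tightness of `ρ` keeps `aₙ` bounded, so a subsequence converges to
some `a`, and since `ρ` is upper semicontinuous on closed intervals, `ρ [a, a + L] ≥ α μ(B)`.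
Then `E = B ∩ f⁻¹[a, a + L]` works.
-/

open Filter Topology

section

variable [MeasurableSpace X] {μ : Measure X} {f : X → ℝ} {E : Set X} {c : ℝ}

theorem exists_ae_mem_Icc_of_oscE_le (hE : μ E ≠ ∞) (hc : 0 ≤ c)
    (hosc : oscE μ f E ≤ ENNReal.ofReal c) :
    ∃ a, ∀ᵐ x ∂μ.restrict E, f x ∈ Icc a (a + c) := by
  have : IsFiniteMeasure (μ.restrict E) := isFiniteMeasure_restrict.2 hE
  set ν := μ.restrict E
  rcases eq_zero_or_neZero ν with hν | _
  · exact ⟨0, by simp [hν]⟩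
  have hpair : ∀ᵐ y ∂ν, ∀ᵐ x ∂ν, |f y - f x| ≤ c := by
    filter_upwards [Measure.ae_ae_of_ae_prod
      ((ENNReal.ae_le_essSup _).mono fun p hp => hp.trans hosc)] with y hy
    filter_upwards [hy] with x hx using (ENNReal.ofReal_le_ofReal_iff hc).1 hx
  obtain ⟨y₀, hy₀⟩ := hpair.exists
  have hbdd : ∀ᵐ x ∂ν, f x ∈ Icc (f y₀ - c) (f y₀ + c) := by
    filter_upwards [hy₀] with x hx
    constructor <;> linarith [abs_le.1 hx]
  have hbelow : IsBoundedUnder (· ≥ ·) (ae ν) f := ⟨f y₀ - c, hbdd.mono fun x hx => hx.1⟩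
  have habove : IsCoboundedUnder (· ≥ ·) (ae ν) f :=
    IsBoundedUnder.isCoboundedUnder_flip ⟨f y₀ + c, hbdd.mono fun x hx => hx.2⟩
  refine ⟨essInf f ν, ?_⟩
  filter_upwards [ae_essInf_le hbelow, hpair] with y hlow hy
  refine ⟨hlow, ?_⟩
  have : f y - c ≤ essInf f ν :=
    le_essInf_of_ae_le _ (hy.mono fun x hx => by linarith [abs_le.1 hx]) habove
  linarith

theorem oscE_le_ofReal_of_mapsTo (hE : μ E ≠ ∞) (hEm : MeasurableSet E) {a : ℝ}
    (hf : MapsTo f E (Icc a (a + c))) : oscE μ f E ≤ ENNReal.ofReal c := by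
  have : IsFiniteMeasure (μ.restrict E) := isFiniteMeasure_restrict.2 hE
  have hmem : ∀ᵐ p ∂(μ.restrict E).prod (μ.restrict E), p ∈ E ×ˢ E := by
    have h := Measure.prod_restrict (μ := μ.restrict E) (ν := μ.restrict E) E E
    rw [Measure.restrict_restrict hEm, inter_self] at h
    rw [h]
    exact ae_restrict_mem (hEm.prod hEm)
  refine essSup_le_of_ae_le _ (hmem.mono fun p hp => ENNReal.ofReal_le_ofReal ?_)
  have h₁ := hf hp.1
  have h₂ := hf hp.2
  exact abs_sub_le_iff.2 ⟨by linarith [h₁.2, h₂.1], by linarith [h₁.1, h₂.2]⟩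

theorem measure_le_map_restrict_of_ae_mem {Y : Type*} [MeasurableSpace Y] {g : X → Y}
    {B : Set X} {s : Set Y} (hg : Measurable g) (hs : MeasurableSet s) (hEB : E ⊆ B)
    (h : ∀ᵐ x ∂μ.restrict E, g x ∈ s) : μ E ≤ (μ.restrict B).map g s :=
  calc μ E = μ.restrict E univ := (Measure.restrict_apply_univ E).symm
    _ ≤ μ.restrict E (g ⁻¹' s) := measure_mono_ae (h.mono fun _ hx _ => hx)
    _ ≤ μ.restrict B (g ⁻¹' s) := Measure.restrict_mono hEB le_rfl _
    _ = (μ.restrict B).map g s := (Measure.map_apply hg hs).symm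

theorem exists_oscE_lt_of_oscAlpha_lt {B : Set X} {α : ℝ} {r : ℝ≥0∞}
    (h : oscAlpha μ f B α < r) :
    ∃ E, (MeasurableSet E ∧ E ⊆ B ∧ ENNReal.ofReal α * μ B < μ E) ∧ oscE μ f E < r := by
  simpa only [oscAlpha, iInf_lt_iff, exists_prop] using h

end

section

variable {ρ : Measure ℝ} [IsFiniteMeasure ρ] {t : ℝ≥0∞}

theorem le_measure_Icc_of_tendsto {ι : Type*} {l : Filter ι} [l.NeBot] {a b : ι → ℝ}
    {a₀ b₀ : ℝ} (ha : Tendsto a l (𝓝 a₀)) (hb : Tendsto b l (𝓝 b₀))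
    (h : ∀ᶠ i in l, t ≤ ρ (Icc (a i) (b i))) : t ≤ ρ (Icc a₀ b₀) := by
  have hinter : ⋂ ε > (0 : ℝ), Icc (a₀ - ε) (b₀ + ε) = Icc a₀ b₀ := by
    ext x
    simp only [mem_iInter, mem_Icc]
    refine ⟨fun hx => ⟨?_, ?_⟩, fun hx ε hε => ⟨by linarith, by linarith⟩⟩
    · exact le_of_forall_pos_le_add fun ε hε => by linarith [(hx ε hε).1]
    · exact le_of_forall_pos_le_add fun ε hε => (hx ε hε).2
  have hlim := tendsto_measure_biInter_gt (μ := ρ) (a := (0 : ℝ))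
    (s := fun ε => Icc (a₀ - ε) (b₀ + ε)) (fun _ _ => measurableSet_Icc.nullMeasurableSet)
    (fun _ _ _ hij => Icc_subset_Icc (by linarith) (by linarith))
    ⟨1, one_pos, measure_ne_top _ _⟩
  rw [hinter] at hlim
  refine ge_of_tendsto hlim (eventually_nhdsWithin_of_forall fun ε (hε : 0 < ε) => ?_)
  obtain ⟨i, hi, hai, hbi⟩ := (h.and ((ha.eventually (lt_mem_nhds (sub_lt_self a₀ hε))).and
    (hb.eventually (gt_mem_nhds (lt_add_of_pos_right b₀ hε))))).exists
  exact hi.trans (measure_mono (Icc_subset_Icc hai.le hbi.le))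

theorem exists_le_measure_Icc_of_tendsto {a c : ℕ → ℝ} {L : ℝ} (hc : Tendsto c atTop (𝓝 L))
    (h : ∀ n, t < ρ (Icc (a n) (a n + c n))) : ∃ a₀, t ≤ ρ (Icc a₀ (a₀ + L)) := by
  rcases eq_zero_or_pos t with rfl | ht
  · exact ⟨0, bot_le⟩
  obtain ⟨K, hK, hρK⟩ : ∃ K, IsCompact K ∧ ρ Kᶜ < t := by
    obtain ⟨ε, hε, hεt⟩ := exists_between ht
    obtain ⟨K, hK, hKε⟩ := isTightMeasureSet_iff_exists_isCompact_measure_compl_le.1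
      (isTightMeasureSet_singleton (μ := ρ)) ε hε
    exact ⟨K, hK, (hKε ρ rfl).trans_lt hεt⟩
  obtain ⟨m, hm⟩ := hK.bddBelow
  obtain ⟨M, hM⟩ := hK.bddAbove
  obtain ⟨C, hC⟩ := hc.bddAbove_range
  have hbound : ∀ n, a n ∈ Icc (m - C) M := fun n => by
    have : ¬ Icc (a n) (a n + c n) ⊆ Kᶜ := fun hsub =>
      (h n).not_ge ((measure_mono hsub).trans hρK.le)
    obtain ⟨x, hxI, hxK⟩ := not_subset.1 this
    have hxK := notMem_compl_iff.1 hxK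
    have := hC (mem_range_self n)
    constructor <;> linarith [hm hxK, hM hxK, hxI.1, hxI.2]
  obtain ⟨a₀, -, φ, hφ, hconv⟩ := isCompact_Icc.tendsto_subseq hbound
  exact ⟨a₀, le_measure_Icc_of_tendsto hconv (hconv.add (hc.comp hφ.tendsto_atTop))
    (Eventually.of_forall fun n => (h (φ n)).le)⟩

end

theorem exists_set_osc_le_general
    {X : Type*} [MeasurableSpace X] (μ : Measure X) (𝔅 : Set (Set X))
    (hull : Set X → Set X) (K : ℝ)
    (hbasis : IsBallBasis μ 𝔅 hull K)
    (f : X → ℝ) (hf : Measurable f)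
    (B : Set X) (hB : B ∈ 𝔅) (α : ℝ) (hα1 : α < 1) :
    ∃ E : Set X, MeasurableSet E ∧ E ⊆ B ∧ ENNReal.ofReal α * μ B ≤ μ E ∧
      oscE μ f E ≤ oscAlpha μ f B α := by
  have hBm := hbasis.measurableSet B hB
  have hBfin := (hbasis.measure_lt_top B hB).ne
  set L := oscAlpha μ f B α
  rcases eq_or_ne L ∞ with hL | hL
  · exact ⟨B, hBm, subset_rfl,
      mul_le_of_le_one_left' (ENNReal.ofReal_le_one.2 hα1.le), hL ▸ le_top⟩
  set c : ℕ → ℝ := fun n => L.toReal + 1 / (n + 1)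
  have hLc : ∀ n, L < ENNReal.ofReal (c n) := fun n => by
    rw [ENNReal.ofReal_add ENNReal.toReal_nonneg (by positivity), ENNReal.ofReal_toReal hL]
    exact ENNReal.lt_add_right hL (by positivity)
  choose E hE hEosc using fun n => exists_oscE_lt_of_oscAlpha_lt (hLc n)
  choose a ha using fun n => exists_ae_mem_Icc_of_oscE_le
    (measure_ne_top_of_subset (hE n).2.1 hBfin) (by positivity) (hEosc n).le
  have : IsFiniteMeasure (μ.restrict B) := isFiniteMeasure_restrict.2 hBfin
  have hc : Tendsto c atTop (𝓝 L.toReal) := by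
    simpa only [add_zero] using tendsto_one_div_add_atTop_nhds_zero_nat.const_add L.toReal
  obtain ⟨a₀, ha₀⟩ := exists_le_measure_Icc_of_tendsto (ρ := (μ.restrict B).map f) hc fun n =>
    (hE n).2.2.trans_le <|
      measure_le_map_restrict_of_ae_mem hf measurableSet_Icc (hE n).2.1 (ha n)
  rw [Measure.map_apply hf measurableSet_Icc, Measure.restrict_apply (hf measurableSet_Icc)]
    at ha₀
  refine ⟨f ⁻¹' Icc a₀ (a₀ + L.toReal) ∩ B, (hf measurableSet_Icc).inter hBm,
    inter_subset_right, ha₀, ?_⟩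
  exact (oscE_le_ofReal_of_mapsTo (measure_ne_top_of_subset inter_subset_right hBfin)
    ((hf measurableSet_Icc).inter hBm) fun x hx => hx.1).trans_eq (ENNReal.ofReal_toReal hL)

theorem exists_set_osc_le
    {X : Type*} [MeasurableSpace X] (μ : Measure X) (𝔅 : Set (Set X))
    (hull : Set X → Set X) (K : ℝ) (hK : 0 < K)
    (hbasis : IsBallBasis μ 𝔅 hull K)
    (f : X → ℝ) (hf : Measurable f)
    (B : Set X) (hB : B ∈ 𝔅) (α : ℝ) (hα : 0 < α) (hα1 : α < 1) :
    ∃ E : Set X, MeasurableSet E ∧ E ⊆ B ∧ ENNReal.ofReal α * μ B ≤ μ E ∧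
      oscE μ f E ≤ oscAlpha μ f B α :=
  exists_set_osc_le_general μ 𝔅 hull K hbasis f hf B hB α hα1
end

section
/- Let d ≥ 1 and let Ω : ℝ^d ∖ {0} → ℝ be bounded, measurable and homogeneous of degree zero (Ω(εx) = Ω(x) for all ε > 0 and x ≠ 0), and set K(x) = Ω(x)/|x|^d. Then there is a constant c_d depending only on d such that for all 0 < r < R, all points x₀ ∈ ℝ^d, all x, x' ∈ B(x₀, r), and every Euclidean ball B'' with B(x₀, R) ⊆ B'', one has ∫_{(x − B'') △ (x' − B'')} |K(y)| dy ≤ c_d · ‖Ω‖_∞ · r/(R − r), where x − B'' = {x − y : y ∈ B''} and △ denotes symmetric difference. -/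
/-!
If `A` is convex, the translates `A \ (v + A) + j • v` (`j ∈ ℕ`) are pairwise disjoint. Hence
`⌊t / ‖v‖⌋ + 1` translates of the part of `A \ (v + A)` lying in `closedBall 0 t` fit into
`closedBall 0 (2 * t)`, so that part has measure `O(‖v‖ t^(d-1))`. For two balls `x - B''` and
`x' - B''` this bounds the part of their symmetric difference in `closedBall 0 t` by
`O(|x - x'| t^(d-1))`. The symmetric difference avoids `ball 0 (R - r)`, and on the dyadic shell
`2^k (R - r) ≤ |y| ≤ 2^(k+1) (R - r)` we have `|K y| ≤ ‖Ω‖_∞ (2^k (R - r))^(-d)`, so summing over the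
shells gives a geometric series of total `O(‖Ω‖_∞ |x - x'| / (R - r))`, and `|x - x'| < 2 r`.
-/

open MeasureTheory Metric Set Function
open scoped ENNReal symmDiff Pointwise

section Convex

variable {E : Type*} [NormedAddCommGroup E] [NormedSpace ℝ E]

theorem Convex.pairwise_disjoint_nsmul_vadd_diff {A : Set E} (hA : Convex ℝ A) (v : E) :
    Pairwise (Disjoint on fun j : ℕ => (j • v) +ᵥ (A \ (v +ᵥ A))) := by
  refine (pairwise_disjoint_on _).2 fun j k hjk => Set.disjoint_left.2 ?_
  intro y hj hk
  simp only [mem_vadd_set_iff_neg_vadd_mem, mem_sdiff, vadd_eq_add] at hj hk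
  -- `y - (j + 1) • v` lies on the segment from `y - j • v` to `y - k • v`
  have hkj : (0 : ℝ) < k - j := sub_pos.2 (by exact_mod_cast hjk)
  have key := hA.add_smul_sub_mem hj.1 hk.1 (t := ((k : ℝ) - j)⁻¹)
    ⟨by positivity, inv_le_one_of_one_le₀ (by
      have : (j : ℝ) + 1 ≤ k := by exact_mod_cast hjk
      linarith)⟩
  apply hj.2
  convert key using 1
  have hsub : -(k • v) + y - (-(j • v) + y) = -(((k : ℝ) - j) • v) := by
    rw [sub_smul, Nat.cast_smul_eq_nsmul, Nat.cast_smul_eq_nsmul]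
    abel
  rw [hsub, smul_neg, smul_smul, inv_mul_cancel₀ hkj.ne', one_smul]
  abel

theorem Convex.ofReal_mul_measure_diff_vadd_inter_closedBall_le [MeasurableSpace E]
    [BorelSpace E] (μ : Measure E) [μ.IsAddLeftInvariant] {A : Set E} (hA : Convex ℝ A)
    (hAm : MeasurableSet A) (v : E) (t : ℝ) :
    ENNReal.ofReal t * μ ((A \ (v +ᵥ A)) ∩ closedBall 0 t) ≤
      ENNReal.ofReal ‖v‖ * μ (closedBall 0 (2 * t)) := by
  rcases le_or_gt t 0 with ht | ht
  · simp [ENNReal.ofReal_of_nonpos ht]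
  rcases eq_or_ne v 0 with rfl | hv
  · simp
  set W := (A \ (v +ᵥ A)) ∩ closedBall 0 t
  have hv0 : 0 < ‖v‖ := norm_pos_iff.2 hv
  set N := ⌊t / ‖v‖⌋₊ + 1
  have hN : t ≤ N * ‖v‖ := by
    have := Nat.lt_floor_add_one (t / ‖v‖)
    rw [div_lt_iff₀ hv0] at this
    push_cast [N]
    exact this.le
  have hdisj : (↑(Finset.range N) : Set ℕ).PairwiseDisjoint fun j : ℕ => (j • v) +ᵥ W :=
    fun j _ k _ hjk => ((hA.pairwise_disjoint_nsmul_vadd_diff v) hjk).mono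
      (vadd_set_mono inter_subset_left) (vadd_set_mono inter_subset_left)
  have hsub : ⋃ j ∈ Finset.range N, (j • v) +ᵥ W ⊆ closedBall 0 (2 * t) := by
    simp only [iUnion_subset_iff, Finset.mem_range]
    rintro j hj _ ⟨w, hw, rfl⟩
    dsimp only
    have hjv : ‖j • v‖ ≤ t := by
      refine (norm_nsmul_le ..).trans ?_
      rw [← le_div_iff₀ hv0]
      calc (j : ℝ) ≤ ⌊t / ‖v‖⌋₊ := by exact_mod_cast Nat.le_of_lt_succ hj
        _ ≤ t / ‖v‖ := Nat.floor_le (by positivity)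
    rw [mem_closedBall_zero_iff, vadd_eq_add]
    linarith [norm_add_le (j • v) w, mem_closedBall_zero_iff.1 hw.2]
  have hW : MeasurableSet W := (hAm.diff (hAm.const_vadd v)).inter measurableSet_closedBall
  have hsum : (N : ℝ≥0∞) * μ W ≤ μ (closedBall 0 (2 * t)) := calc
    (N : ℝ≥0∞) * μ W = ∑ j ∈ Finset.range N, μ ((j • v) +ᵥ W) := by simp [measure_vadd]
    _ = μ (⋃ j ∈ Finset.range N, (j • v) +ᵥ W) :=
      (measure_biUnion_finset hdisj fun j _ => hW.const_vadd _).symm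
    _ ≤ _ := measure_mono hsub
  calc ENNReal.ofReal t * μ W ≤ ENNReal.ofReal (N * ‖v‖) * μ W := by gcongr
    _ = ENNReal.ofReal ‖v‖ * (N * μ W) := by
      rw [ENNReal.ofReal_mul (Nat.cast_nonneg N), ENNReal.ofReal_natCast]; ring
    _ ≤ ENNReal.ofReal ‖v‖ * μ (closedBall 0 (2 * t)) := by gcongr

end Convex

section Balls

variable {E : Type*} [NormedAddCommGroup E] [NormedSpace ℝ E] [MeasurableSpace E] [BorelSpace E]
  [FiniteDimensional ℝ E] (μ : Measure E) [μ.IsAddHaarMeasure]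

theorem addHaar_ball_diff_ball_inter_closedBall_le {n : ℕ} (hn : Module.finrank ℝ E = n + 1)
    (a b : E) (ρ : ℝ) {t : ℝ} (ht : 0 < t) :
    μ ((ball a ρ \ ball b ρ) ∩ closedBall 0 t) ≤
      ENNReal.ofReal (2 ^ (n + 1) * dist a b * t ^ n) * μ (ball 0 1) := by
  have h := (convex_ball a ρ).ofReal_mul_measure_diff_vadd_inter_closedBall_le μ
    measurableSet_ball (b - a) t
  rw [vadd_ball, vadd_eq_add, sub_add_cancel, Measure.addHaar_closedBall μ 0 (by positivity),
    hn, ← mul_assoc, ← ENNReal.ofReal_mul (norm_nonneg _)] at h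
  rw [← ENNReal.mul_le_mul_iff_right (ENNReal.ofReal_pos.2 ht).ne' ENNReal.ofReal_ne_top]
  convert h using 1
  rw [← mul_assoc, ← ENNReal.ofReal_mul ht.le, ← norm_sub_rev, ← dist_eq_norm]
  ring_nf

theorem addHaar_symmDiff_ball_inter_closedBall_le {n : ℕ} (hn : Module.finrank ℝ E = n + 1)
    (a b : E) (ρ : ℝ) {t : ℝ} (ht : 0 < t) :
    μ ((ball a ρ ∆ ball b ρ) ∩ closedBall 0 t) ≤
      ENNReal.ofReal (2 ^ (n + 2) * dist a b * t ^ n) * μ (ball 0 1) := calc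
  _ ≤ μ ((ball a ρ \ ball b ρ) ∩ closedBall 0 t) + μ ((ball b ρ \ ball a ρ) ∩ closedBall 0 t) := by
    rw [Set.symmDiff_def, union_inter_distrib_right]
    exact measure_union_le _ _
  _ ≤ ENNReal.ofReal (2 ^ (n + 1) * dist a b * t ^ n) * μ (ball 0 1) +
      ENNReal.ofReal (2 ^ (n + 1) * dist a b * t ^ n) * μ (ball 0 1) := by
    gcongr
    · exact addHaar_ball_diff_ball_inter_closedBall_le μ hn a b ρ ht
    · rw [dist_comm]; exact addHaar_ball_diff_ball_inter_closedBall_le μ hn b a ρ ht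
  _ = _ := by
    rw [← add_mul, ← ENNReal.ofReal_add (by positivity) (by positivity)]
    ring_nf

theorem addHaar_symmDiff_image_sub_ball_inter_closedBall_le {n : ℕ}
    (hn : Module.finrank ℝ E = n + 1) (x x' z : E) (ρ : ℝ) {t : ℝ} (ht : 0 < t) :
    μ ((((fun y => x - y) '' ball z ρ) ∆ ((fun y => x' - y) '' ball z ρ)) ∩ closedBall 0 t) ≤
      ENNReal.ofReal (2 ^ (n + 2) * dist x x' * t ^ n) * μ (ball 0 1) := by
  have h := addHaar_symmDiff_ball_inter_closedBall_le μ hn (x - z) (x' - z) ρ ht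
  rwa [dist_sub_right, ← IsometryEquiv.subLeft_apply, ← IsometryEquiv.subLeft_apply,
    ← IsometryEquiv.image_ball, ← IsometryEquiv.image_ball] at h

end Balls

section Integrals

variable {E : Type*} [SeminormedAddCommGroup E] [MeasurableSpace E] (μ : Measure E)

theorem setLIntegral_inv_norm_pow_le {S : Set E} {n : ℕ} {m : ℝ} {V : ℝ≥0∞} (hm : 0 < m)
    (hS : ∀ y ∈ S, m ≤ ‖y‖)
    (hV : ∀ t, 0 < t → μ (S ∩ closedBall 0 t) ≤ ENNReal.ofReal (t ^ n) * V) :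
    ∫⁻ y in S, ENNReal.ofReal (‖y‖ ^ (n + 1))⁻¹ ∂μ ≤ ENNReal.ofReal (2 ^ (n + 1) / m) * V := by
  set shell : ℕ → Set E := fun k => S ∩ {y | 2 ^ k * m ≤ ‖y‖} ∩ closedBall 0 (2 ^ (k + 1) * m)
  have hcover : S ⊆ ⋃ k, shell k := by
    intro y hy
    obtain ⟨k, hk, hk'⟩ := exists_nat_pow_near ((one_le_div hm).2 (hS y hy)) one_lt_two
    rw [le_div_iff₀ hm] at hk
    rw [div_lt_iff₀ hm] at hk'
    exact mem_iUnion.2 ⟨k, ⟨hy, hk⟩, mem_closedBall_zero_iff.2 hk'.le⟩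
  have hshell : ∀ k, ∫⁻ y in shell k, ENNReal.ofReal (‖y‖ ^ (n + 1))⁻¹ ∂μ ≤
      ENNReal.ofReal (2 ^ n / m) * 2⁻¹ ^ k * V := fun k => calc
    _ ≤ ∫⁻ _ in shell k, ENNReal.ofReal ((2 ^ k * m) ^ (n + 1))⁻¹ ∂μ :=
      setLIntegral_mono measurable_const fun y hy => ENNReal.ofReal_le_ofReal <|
        inv_anti₀ (by positivity) (pow_le_pow_left₀ (by positivity) hy.1.2 _)
    _ = ENNReal.ofReal ((2 ^ k * m) ^ (n + 1))⁻¹ * μ (shell k) := setLIntegral_const _ _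
    _ ≤ ENNReal.ofReal ((2 ^ k * m) ^ (n + 1))⁻¹ *
        (ENNReal.ofReal ((2 ^ (k + 1) * m) ^ n) * V) := by
      gcongr
      exact (measure_mono (inter_subset_inter_left _ inter_subset_left)).trans
        (hV _ (by positivity))
    _ = ENNReal.ofReal (2 ^ n / m * 2⁻¹ ^ k) * V := by
      rw [← mul_assoc, ← ENNReal.ofReal_mul (by positivity)]
      congr 2
      rw [inv_pow]
      field_simp
      ring
    _ = ENNReal.ofReal (2 ^ n / m) * 2⁻¹ ^ k * V := by
      rw [ENNReal.ofReal_mul (by positivity), ENNReal.ofReal_pow (by norm_num),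
        ENNReal.ofReal_inv_of_pos two_pos, ENNReal.ofReal_ofNat]
  calc ∫⁻ y in S, ENNReal.ofReal (‖y‖ ^ (n + 1))⁻¹ ∂μ
      ≤ ∫⁻ y in ⋃ k, shell k, ENNReal.ofReal (‖y‖ ^ (n + 1))⁻¹ ∂μ := lintegral_mono_set hcover
    _ ≤ ∑' k, ∫⁻ y in shell k, ENNReal.ofReal (‖y‖ ^ (n + 1))⁻¹ ∂μ := lintegral_iUnion_le _ _
    _ ≤ ∑' k, ENNReal.ofReal (2 ^ n / m) * 2⁻¹ ^ k * V := ENNReal.tsum_le_tsum hshell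
    _ = ENNReal.ofReal (2 ^ (n + 1) / m) * V := by
      rw [ENNReal.tsum_mul_right, ENNReal.tsum_mul_left, ENNReal.tsum_geometric,
        ENNReal.one_sub_inv_two, inv_inv, ← ENNReal.ofReal_ofNat 2,
        ← ENNReal.ofReal_mul (by positivity)]
      ring_nf

theorem setLIntegral_ofReal_abs_div_norm_pow_le [OpensMeasurableSpace E] {S : Set E}
    (hS : ∀ y ∈ S, y ≠ 0) {Ω : E → ℝ} {M : ℝ} (hΩ : ∀ y, y ≠ 0 → |Ω y| ≤ M) (k : ℕ) :
    ∫⁻ y in S, ENNReal.ofReal |Ω y / ‖y‖ ^ k| ∂μ ≤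
      ENNReal.ofReal M * ∫⁻ y in S, ENNReal.ofReal (‖y‖ ^ k)⁻¹ ∂μ := calc
  _ ≤ ∫⁻ y in S, ENNReal.ofReal M * ENNReal.ofReal (‖y‖ ^ k)⁻¹ ∂μ := by
    refine setLIntegral_mono (by fun_prop) fun y hy => ?_
    rw [← ENNReal.ofReal_mul' (by positivity), abs_div, abs_pow, abs_norm, div_eq_mul_inv]
    exact ENNReal.ofReal_le_ofReal (mul_le_mul_of_nonneg_right (hΩ y (hS y hy)) (by positivity))
  _ = _ := lintegral_const_mul' _ _ ENNReal.ofReal_ne_top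

end Integrals

section Geometry

variable {E : Type*} [SeminormedAddCommGroup E] {x x' x₀ z : E} {r R ρ : ℝ}

theorem ball_zero_subset_image_sub_ball (hx : x ∈ ball x₀ r) (h : ball x₀ R ⊆ ball z ρ) :
    ball 0 (R - r) ⊆ (fun y => x - y) '' ball z ρ := by
  intro w hw
  refine ⟨x - w, h ?_, sub_sub_cancel x w⟩
  rw [mem_ball] at hx ⊢
  rw [mem_ball_zero_iff] at hw
  calc dist (x - w) x₀ ≤ dist (x - w) x + dist x x₀ := dist_triangle _ _ _
    _ = ‖w‖ + dist x x₀ := by rw [dist_self_sub_left]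
    _ < R := by linarith

theorem sub_le_norm_of_mem_symmDiff_image_sub_ball (hx : x ∈ ball x₀ r) (hx' : x' ∈ ball x₀ r)
    (h : ball x₀ R ⊆ ball z ρ) {y : E}
    (hy : y ∈ ((fun y => x - y) '' ball z ρ) ∆ ((fun y => x' - y) '' ball z ρ)) :
    R - r ≤ ‖y‖ := by
  by_contra! hy0
  rw [← mem_ball_zero_iff] at hy0
  rcases hy with ⟨-, hy'⟩ | ⟨-, hy'⟩
  · exact hy' (ball_zero_subset_image_sub_ball hx' h hy0)
  · exact hy' (ball_zero_subset_image_sub_ball hx h hy0)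

end Geometry

theorem homogeneous_kernel_symmDiff_bound (d : ℕ) (hd : 1 ≤ d) :
    ∃ c : ℝ, 0 < c ∧
      ∀ (Ω : EuclideanSpace ℝ (Fin d) → ℝ) (M : ℝ),
        Measurable Ω →
        (∀ x : EuclideanSpace ℝ (Fin d), x ≠ 0 → |Ω x| ≤ M) →
        (∀ (ε : ℝ) (x : EuclideanSpace ℝ (Fin d)), 0 < ε → x ≠ 0 → Ω (ε • x) = Ω x) →
        ∀ (x₀ : EuclideanSpace ℝ (Fin d)) (r R : ℝ), 0 < r → r < R →
          ∀ x ∈ ball x₀ r, ∀ x' ∈ ball x₀ r,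
            ∀ (z : EuclideanSpace ℝ (Fin d)) (ρ : ℝ), ball x₀ R ⊆ ball z ρ →
              (∫⁻ y in
                  ((fun y => x - y) '' ball z ρ) ∆ ((fun y => x' - y) '' ball z ρ),
                  ENNReal.ofReal |Ω y / ‖y‖ ^ d|) ≤
                ENNReal.ofReal (c * M * r / (R - r)) := by
  obtain ⟨n, rfl⟩ : ∃ n, d = n + 1 := ⟨d - 1, by omega⟩
  set ω : ℝ := (volume (ball (0 : EuclideanSpace ℝ (Fin (n + 1))) 1)).toReal
  have hω : volume (ball (0 : EuclideanSpace ℝ (Fin (n + 1))) 1) = ENNReal.ofReal ω :=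
    (ENNReal.ofReal_toReal measure_ball_lt_top.ne).symm
  refine ⟨4 ^ (n + 2) * ω, mul_pos (by positivity) (ENNReal.toReal_pos
    (measure_ball_pos volume 0 one_pos).ne' measure_ball_lt_top.ne), ?_⟩
  intro Ω M _ hΩ _ x₀ r R hr hrR x hx x' hx' z ρ hball
  have hS := fun y => sub_le_norm_of_mem_symmDiff_image_sub_ball (y := y) hx hx' hball
  have hvol : ∀ t, 0 < t → volume ((((fun y => x - y) '' ball z ρ) ∆
      ((fun y => x' - y) '' ball z ρ)) ∩ closedBall 0 t) ≤
      ENNReal.ofReal (t ^ n) * (ENNReal.ofReal (2 ^ (n + 2) * (2 * r)) * ENNReal.ofReal ω) := by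
    intro t ht
    refine (addHaar_symmDiff_image_sub_ball_inter_closedBall_le volume finrank_euclideanSpace_fin
      x x' z ρ ht).trans ?_
    rw [hω, mul_comm _ (t ^ n), ENNReal.ofReal_mul (by positivity), mul_assoc]
    gcongr
    linarith [dist_triangle_right x x' x₀, mem_ball.1 hx, mem_ball.1 hx']
  calc _ ≤ ENNReal.ofReal M * ∫⁻ y in _, ENNReal.ofReal (‖y‖ ^ (n + 1))⁻¹ :=
        setLIntegral_ofReal_abs_div_norm_pow_le volume
          (fun y hy => norm_pos_iff.1 ((sub_pos.2 hrR).trans_le (hS y hy))) hΩ (n + 1)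
    _ ≤ ENNReal.ofReal M * (ENNReal.ofReal (2 ^ (n + 1) / (R - r)) *
          (ENNReal.ofReal (2 ^ (n + 2) * (2 * r)) * ENNReal.ofReal ω)) := by
        gcongr
        exact setLIntegral_inv_norm_pow_le volume (sub_pos.2 hrR) hS hvol
    _ = ENNReal.ofReal (4 ^ (n + 2) * ω * M * r / (R - r)) := by
        rw [← ENNReal.ofReal_mul (by positivity), ← ENNReal.ofReal_mul (by positivity),
          ← ENNReal.ofReal_mul' (by positivity), show (4 : ℝ) = 2 * 2 by norm_num, mul_pow]
        ring_nf
end
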